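/- arXiv:1707.04667 — 7 statements merged into one kernel-verified Lean document; each statement's English description precedes it below -/
import Mathlib

section
/- As operators on P⁻, where x_j also denotes left multiplication by x_j: for 1 ≤ i ≤ n−1, r_i x_{i+1} + x_{i+1} r_i = s_i and r_i x_i + x_i r_i = s_i; and for j ≠ i, i+1, r_i x_j + x_j r_i = 0. -/
noncomputable section

/-- The defining relations of the skew polynomial ring
`P⁻ = ℂ⟨x₁,…,xₙ⟩/⟨xᵢxⱼ + xⱼxᵢ : i ≠ j⟩`. -/
inductive SkewRel (n : ℕ) : FreeAlgebra ℂ (Fin n) → FreeAlgebra ℂ (Fin n) → Prop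
  | anticomm (i j : Fin n) (h : i ≠ j) :
      SkewRel n (FreeAlgebra.ι ℂ i * FreeAlgebra.ι ℂ j)
        (-(FreeAlgebra.ι ℂ j * FreeAlgebra.ι ℂ i))

/-- The skew polynomial ring `P⁻`. -/
abbrev SkewPoly (n : ℕ) := RingQuot (SkewRel n)

/-- The generators `xᵢ` of `P⁻`. -/
def X {n : ℕ} (i : Fin n) : SkewPoly n :=
  RingQuot.mkAlgHom ℂ (SkewRel n) (FreeAlgebra.ι ℂ i)

/-- `f ∈ P⁻` is homogeneous of degree `d`: it lies in the span of the degree-`d` monomials. -/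
def IsHomog {n : ℕ} (d : ℕ) (f : SkewPoly n) : Prop :=
  f ∈ Submodule.span ℂ
    {m : SkewPoly n | ∃ w : List (Fin n), w.length = d ∧ m = (w.map X).prod}

/-- The operator of left multiplication by `xᵢ` on `P⁻`. -/
def mulX {n : ℕ} (i : Fin n) : Module.End ℂ (SkewPoly n) :=
  LinearMap.mulLeft ℂ (X i)

/-! Since `s_{i,k}` is an algebra map, `r_{i,k}(x_j f) = ∂_{i,k}(x_{σ j} · s_{i,k} f)` with
`σ = (i k)`, and the odd Leibniz rule for the degree-one factor `x_{σ j}` gives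
`∂_{i,k}(x_{σ j}) · s_{i,k} f - x_j · r_{i,k} f`. Hence `r_{i,k} x_j + x_j r_{i,k}` is left
multiplication by the scalar `∂_{i,k}(x_{σ j}) ∈ {0, 1}` composed with `s_{i,k}`. -/

lemma isHomog_one_X {n : ℕ} (j : Fin n) : IsHomog 1 (X j) :=
  Submodule.subset_span ⟨[j], rfl, by simp⟩

section OddDerivation

variable {n : ℕ} {σ : SkewPoly n →ₐ[ℂ] SkewPoly n} {D : Module.End ℂ (SkewPoly n)}
  (hD : ∀ (d : ℕ) (f g : SkewPoly n), IsHomog d f →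
    D (f * g) = D f * g + (-1 : ℂ) ^ d • (σ f * D g))
include hD

lemma X_mul_of_odd_leibniz {j j' : Fin n} (hσj : σ (X j) = X j') (g : SkewPoly n) :
    D (X j * g) = D (X j) * g - X j' * D g := by
  rw [hD 1 _ g (isHomog_one_X j), hσj, pow_one]
  module

lemma comp_mul_mulX_add_of_odd_leibniz {j j' : Fin n} (hσj : σ (X j) = X j')
    (hσj' : σ (X j') = X j) :
    (D ∘ₗ σ.toLinearMap) * mulX j + mulX j * (D ∘ₗ σ.toLinearMap) =
      LinearMap.mulLeft ℂ (D (X j')) ∘ₗ σ.toLinearMap := by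
  ext f
  simp only [mulX, LinearMap.add_apply, Module.End.mul_apply, LinearMap.comp_apply,
    LinearMap.mulLeft_apply, AlgHom.toLinearMap_apply, map_mul, hσj,
    X_mul_of_odd_leibniz hD hσj', sub_add_cancel]

end OddDerivation

theorem stmt3_general (n : ℕ)
    -- `s i k` is the algebra automorphism of `P⁻` swapping `xᵢ` and `x_k`
    (s : Fin n → Fin n → (SkewPoly n →ₐ[ℂ] SkewPoly n))
    (hs : ∀ i k j : Fin n, i ≠ k → s i k (X j) = X (Equiv.swap i k j))
    -- `pd i k` is the odd divided difference operator `∂_{i,k}`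
    (pd : Fin n → Fin n → Module.End ℂ (SkewPoly n))
    (hpdi : ∀ i k : Fin n, i ≠ k → pd i k (X i) = 1)
    (hpdk : ∀ i k : Fin n, i ≠ k → pd i k (X k) = 1)
    (hpd0 : ∀ i k j : Fin n, i ≠ k → j ≠ i → j ≠ k → pd i k (X j) = 0)
    (hpdL : ∀ i k : Fin n, i ≠ k → ∀ (d : ℕ) (f g : SkewPoly n), IsHomog d f →
      pd i k (f * g) = pd i k f * g + (-1 : ℂ) ^ d • (s i k f * pd i k g))
    -- `r i k = ∂_{i,k} ∘ s_{i,k}`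
    (r : Fin n → Fin n → Module.End ℂ (SkewPoly n))
    (hr : ∀ i k : Fin n, i ≠ k → r i k = pd i k ∘ₗ (s i k).toLinearMap)
    (i i' : Fin n) (hii' : (i' : ℕ) = (i : ℕ) + 1) :
    r i i' * mulX i' + mulX i' * r i i' = (s i i').toLinearMap ∧
    r i i' * mulX i + mulX i * r i i' = (s i i').toLinearMap ∧
    (∀ j : Fin n, j ≠ i → j ≠ i' → r i i' * mulX j + mulX j * r i i' = 0) := by
  have hii : i ≠ i' := fun h => by subst h; omega
  have key (j : Fin n) := comp_mul_mulX_add_of_odd_leibniz (hpdL i i' hii) (hs i i' j hii)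
    (by rw [hs i i' _ hii, Equiv.swap_apply_self])
  rw [hr i i' hii]
  refine ⟨?_, ?_, fun j hji hji' => ?_⟩
  · rw [key, Equiv.swap_apply_right, hpdi i i' hii, LinearMap.mulLeft_one, LinearMap.id_comp]
  · rw [key, Equiv.swap_apply_left, hpdk i i' hii, LinearMap.mulLeft_one, LinearMap.id_comp]
  · rw [key, Equiv.swap_apply_of_ne_of_ne hji hji', hpd0 i i' j hii hji hji',
      LinearMap.mulLeft_zero_eq_zero, LinearMap.zero_comp]

/-- `rᵢ x_{i+1} + x_{i+1} rᵢ = sᵢ`, `rᵢ xᵢ + xᵢ rᵢ = sᵢ`, and `rᵢ xⱼ + xⱼ rᵢ = 0`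
for `j ≠ i, i+1`, as operators on `P⁻` (`xⱼ` denoting left multiplication). -/
theorem stmt3 (n : ℕ) (hn : 2 ≤ n)
    -- `s i k` is the algebra automorphism of `P⁻` swapping `xᵢ` and `x_k`
    (s : Fin n → Fin n → (SkewPoly n →ₐ[ℂ] SkewPoly n))
    (hs : ∀ i k j : Fin n, i ≠ k → s i k (X j) = X (Equiv.swap i k j))
    -- `pd i k` is the odd divided difference operator `∂_{i,k}`
    (pd : Fin n → Fin n → Module.End ℂ (SkewPoly n))
    (hpdi : ∀ i k : Fin n, i ≠ k → pd i k (X i) = 1)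
    (hpdk : ∀ i k : Fin n, i ≠ k → pd i k (X k) = 1)
    (hpd0 : ∀ i k j : Fin n, i ≠ k → j ≠ i → j ≠ k → pd i k (X j) = 0)
    (hpdL : ∀ i k : Fin n, i ≠ k → ∀ (d : ℕ) (f g : SkewPoly n), IsHomog d f →
      pd i k (f * g) = pd i k f * g + (-1 : ℂ) ^ d • (s i k f * pd i k g))
    -- `r i k = ∂_{i,k} ∘ s_{i,k}`
    (r : Fin n → Fin n → Module.End ℂ (SkewPoly n))
    (hr : ∀ i k : Fin n, i ≠ k → r i k = pd i k ∘ₗ (s i k).toLinearMap)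
    (i i' : Fin n) (hii' : (i' : ℕ) = (i : ℕ) + 1) :
    r i i' * mulX i' + mulX i' * r i i' = (s i i').toLinearMap ∧
    r i i' * mulX i + mulX i * r i i' = (s i i').toLinearMap ∧
    (∀ j : Fin n, j ≠ i → j ≠ i' → r i i' * mulX j + mulX j * r i i' = 0) :=
  stmt3_general n s hs pd hpdi hpdk hpd0 hpdL r hr i i' hii'
end
end

section
/- For all 1 ≤ i ≠ k ≤ n and all f ∈ P⁻, the operator r_{i,k} has the explicit form (x_i² − x_k²)·r_{i,k}(f) = (x_i − x_k)·s_{i,k}(f) − x_i·τ_i(f) + x_k·τ_k(f); that is, r_{i,k} = (x_i² − x_k²)^{−1}[(x_i − x_k)s_{i,k} − x_i τ_i + x_k τ_k]. (Note that x_i² − x_k² is central in P⁻.) -/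
/-!
Both sides of the formula are `ℂ`-linear in `f`, so it suffices to check it on `1` and to show
that it passes from `g` to `xⱼ g`. The twisted Leibniz rule gives
`r_{i,k}(xⱼ g) = ∂_{i,k}(s_{i,k} xⱼ) · s_{i,k} g − xⱼ · r_{i,k} g`, and since every generator
anticommutes with `xᵢ` and `x_k` unless it equals one of them, multiplying the formula for `g` on
the left by `xⱼ` yields the formula for `xⱼ g` in each of the three cases `j = i`, `j = k`,
`j ∉ {i, k}`.
-/

noncomputable section

open LinearMap

theorem Submodule.eq_top_of_one_mem_of_mul_mem {R A : Type*} [CommSemiring R] [Semiring A]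
    [Algebra R A] {s : Set A} (hs : Algebra.adjoin R s = ⊤) (M : Submodule R A) (h1 : 1 ∈ M)
    (hmul : ∀ x ∈ s, ∀ g ∈ M, x * g ∈ M) : M = ⊤ := by
  refine eq_top_iff'.mpr fun f => ?_
  have hf : f ∈ Algebra.adjoin R s := hs ▸ Algebra.mem_top
  suffices ∀ g ∈ M, f * g ∈ M by simpa using this 1 h1
  induction hf using Algebra.adjoin_induction with
  | mem x hx => exact hmul x hx
  | algebraMap c =>
    intro g hg
    rw [Algebra.algebraMap_eq_smul_one, smul_mul_assoc, one_mul]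
    exact M.smul_mem c hg
  | add x y _ _ hx hy =>
    intro g hg
    rw [add_mul]
    exact M.add_mem (hx g hg) (hy g hg)
  | mul x y _ _ hx hy =>
    intro g hg
    rw [mul_assoc]
    exact hx _ (hy g hg)

/-- The induction step of the formula, in an arbitrary ring: `ρ, A, B, C` play the roles of
`r g, s g, τᵢ g, τ_k g`, and `c, c', δ, ta, tb` those of
`xⱼ, s xⱼ, ∂(s xⱼ), τᵢ xⱼ, τ_k xⱼ`. -/
theorem sq_sub_sq_mul_formula_step {R : Type*} [Ring R] {a b c c' δ ta tb A B C ρ : R}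
    (hc : Commute (a ^ 2 - b ^ 2) c) (hδ : (a - b) * c' = (a ^ 2 - b ^ 2) * δ - c * (a - b))
    (ha : a * ta = -(c * a)) (hb : b * tb = -(c * b))
    (h : (a ^ 2 - b ^ 2) * ρ = (a - b) * A - a * B + b * C) :
    (a ^ 2 - b ^ 2) * (δ * A - c * ρ) = (a - b) * (c' * A) - a * (ta * B) + b * (tb * C) := by
  rw [mul_sub, hc.left_comm, h, ← mul_assoc, ← mul_assoc (a - b), hδ, ← mul_assoc a,
    ← mul_assoc b, ha, hb]
  noncomm_ring

theorem commute_sq_of_mul_eq_neg {R : Type*} [Ring R] {a c : R} (h : c * a = -(a * c)) :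
    Commute c (a ^ 2) := by
  have : SemiconjBy c a (-a) := by rw [SemiconjBy, h, neg_mul]
  have h2 := this.pow_right 2
  rwa [neg_sq] at h2

section Generators

variable {n : ℕ}

theorem X_mul_X_of_ne {i j : Fin n} (h : i ≠ j) : X i * X j = -(X j * X i) := by
  simpa [X] using RingQuot.mkAlgHom_rel ℂ (SkewRel.anticomm i j h)

theorem commute_X_X_sq (i j : Fin n) : Commute (X j) (X i ^ 2) := by
  by_cases hji : j = i
  · rw [hji]
    exact Commute.self_pow (X i) 2
  · exact commute_sq_of_mul_eq_neg (X_mul_X_of_ne hji)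

theorem adjoin_range_X : Algebra.adjoin ℂ (Set.range (X : Fin n → SkewPoly n)) = ⊤ := by
  have : Set.range (X : Fin n → SkewPoly n) =
      RingQuot.mkAlgHom ℂ (SkewRel n) '' Set.range (FreeAlgebra.ι ℂ) := by
    rw [← Set.range_comp]
    rfl
  rw [this, Algebra.adjoin_image, FreeAlgebra.adjoin_range_ι, Algebra.map_top,
    AlgHom.range_eq_top]
  exact RingQuot.mkAlgHom_surjective ℂ _

theorem isHomog_X (j : Fin n) : IsHomog 1 (X j) :=
  Submodule.subset_span ⟨[j], rfl, by simp⟩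

theorem X_mul_map_X_eq_neg {τ : SkewPoly n →ₐ[ℂ] SkewPoly n} {i : Fin n}
    (hτ : ∀ j, τ (X j) = if j = i then -X j else X j) (j : Fin n) :
    X i * τ (X j) = -(X j * X i) := by
  rw [hτ]
  split_ifs with hji
  · rw [hji]
    exact mul_neg (X i) (X i)
  · exact X_mul_X_of_ne (Ne.symm hji)

end Generators

section DividedDifference

def IsTwistedOddDerivation {n : ℕ} (σ : SkewPoly n →ₐ[ℂ] SkewPoly n)
    (pd : Module.End ℂ (SkewPoly n)) : Prop :=
  ∀ (d : ℕ) (f g : SkewPoly n), IsHomog d f →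
    pd (f * g) = pd f * g + (-1 : ℂ) ^ d • (σ f * pd g)

variable {n : ℕ} {σ : SkewPoly n →ₐ[ℂ] SkewPoly n} {pd : Module.End ℂ (SkewPoly n)}

theorem IsTwistedOddDerivation.map_one (hL : IsTwistedOddDerivation σ pd) : pd 1 = 0 := by
  have h := hL 0 1 1 (Submodule.subset_span ⟨[], rfl, by simp⟩)
  rw [mul_one, mul_one, pow_zero, one_smul, _root_.map_one σ, one_mul, left_eq_add] at h
  exact h

theorem IsTwistedOddDerivation.map_X_mul (hL : IsTwistedOddDerivation σ pd)
    {j j' : Fin n} (hσj : σ (X j) = X j') (hσj' : σ (X j') = X j) (g : SkewPoly n) :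
    pd (σ (X j * g)) = pd (X j') * σ g - X j * pd (σ g) := by
  rw [map_mul, hσj, hL 1 _ _ (isHomog_X j'), hσj', pow_one, neg_one_smul ℂ (X j * pd (σ g)),
    sub_eq_add_neg]

theorem X_sub_X_mul_X_swap {i k : Fin n} (hpdi : pd (X i) = 1)
    (hpdk : pd (X k) = 1) (hpd0 : ∀ j, j ≠ i → j ≠ k → pd (X j) = 0) (j : Fin n) :
    (X i - X k) * X (Equiv.swap i k j) =
      (X i ^ 2 - X k ^ 2) * pd (X (Equiv.swap i k j)) - X j * (X i - X k) := by
  by_cases hji : j = i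
  · rw [hji, Equiv.swap_apply_left, hpdk]
    simp only [sq, mul_one, sub_mul, mul_sub]
    abel
  by_cases hjk : j = k
  · rw [hjk, Equiv.swap_apply_right, hpdi]
    simp only [sq, mul_one, sub_mul, mul_sub]
    abel
  rw [Equiv.swap_apply_of_ne_of_ne hji hjk, hpd0 j hji hjk, mul_zero, zero_sub, sub_mul,
    mul_sub, X_mul_X_of_ne (Ne.symm hji), X_mul_X_of_ne (Ne.symm hjk)]
  abel

end DividedDifference

theorem stmt5_general (n : ℕ)
    -- `s i k` is the algebra automorphism of `P⁻` swapping `xᵢ` and `x_k`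
    (s : Fin n → Fin n → (SkewPoly n →ₐ[ℂ] SkewPoly n))
    (hs : ∀ i k j : Fin n, i ≠ k → s i k (X j) = X (Equiv.swap i k j))
    -- `τ i` is the algebra automorphism of `P⁻` sending `xᵢ` to `-xᵢ` and fixing the others
    (τ : Fin n → (SkewPoly n →ₐ[ℂ] SkewPoly n))
    (hτ : ∀ i j : Fin n, τ i (X j) = if j = i then -X j else X j)
    -- `pd i k` is the odd divided difference operator `∂_{i,k}`
    (pd : Fin n → Fin n → Module.End ℂ (SkewPoly n))
    (hpdi : ∀ i k : Fin n, i ≠ k → pd i k (X i) = 1)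
    (hpdk : ∀ i k : Fin n, i ≠ k → pd i k (X k) = 1)
    (hpd0 : ∀ i k j : Fin n, i ≠ k → j ≠ i → j ≠ k → pd i k (X j) = 0)
    (hpdL : ∀ i k : Fin n, i ≠ k → ∀ (d : ℕ) (f g : SkewPoly n), IsHomog d f →
      pd i k (f * g) = pd i k f * g + (-1 : ℂ) ^ d • (s i k f * pd i k g))
    -- `r i k = ∂_{i,k} ∘ s_{i,k}`
    (r : Fin n → Fin n → Module.End ℂ (SkewPoly n))
    (hr : ∀ i k : Fin n, i ≠ k → r i k = pd i k ∘ₗ (s i k).toLinearMap)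
    (i k : Fin n) (hik : i ≠ k) (f : SkewPoly n) :
    (X i ^ 2 - X k ^ 2) * r i k f
      = (X i - X k) * s i k f - X i * τ i f + X k * τ k f := by
  have hr' : ∀ g, r i k g = pd i k (s i k g) := fun g => by rw [hr i k hik]; rfl
  have hder : IsTwistedOddDerivation (s i k) (pd i k) := hpdL i k hik
  have hformula := Submodule.eq_top_of_one_mem_of_mul_mem adjoin_range_X
    (eqLocus (mulLeft ℂ (X i ^ 2 - X k ^ 2) ∘ₗ r i k)
      (mulLeft ℂ (X i - X k) ∘ₗ (s i k).toLinearMap - mulLeft ℂ (X i) ∘ₗ (τ i).toLinearMap +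
        mulLeft ℂ (X k) ∘ₗ (τ k).toLinearMap)) ?_ ?_
  · simpa using LinearMap.congr_fun (eqLocus_eq_top.mp hformula) f
  · simp [hr', hder.map_one]
  · rintro _ ⟨j, rfl⟩ g hg
    simp only [mem_eqLocus, comp_apply, mulLeft_apply, LinearMap.add_apply,
      LinearMap.sub_apply, AlgHom.toLinearMap_apply, hr'] at hg ⊢
    have hsj := hs i k j hik
    rw [hder.map_X_mul hsj (by rw [hs i k _ hik, Equiv.swap_apply_self]),
      map_mul, map_mul, map_mul, hsj]
    exact sq_sub_sq_mul_formula_step (((commute_X_X_sq i j).sub_right (commute_X_X_sq k j)).symm)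
      (X_sub_X_mul_X_swap (hpdi i k hik) (hpdk i k hik) (hpd0 i k · hik) j)
      (X_mul_map_X_eq_neg (hτ i) j) (X_mul_map_X_eq_neg (hτ k) j) hg

/-- The explicit form of `r_{i,k}`:
`(xᵢ² − x_k²)·r_{i,k}(f) = (xᵢ − x_k)·s_{i,k}(f) − xᵢ·τᵢ(f) + x_k·τ_k(f)`. -/
theorem stmt5 (n : ℕ) (hn : 2 ≤ n)
    -- `s i k` is the algebra automorphism of `P⁻` swapping `xᵢ` and `x_k`
    (s : Fin n → Fin n → (SkewPoly n →ₐ[ℂ] SkewPoly n))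
    (hs : ∀ i k j : Fin n, i ≠ k → s i k (X j) = X (Equiv.swap i k j))
    -- `τ i` is the algebra automorphism of `P⁻` sending `xᵢ` to `-xᵢ` and fixing the others
    (τ : Fin n → (SkewPoly n →ₐ[ℂ] SkewPoly n))
    (hτ : ∀ i j : Fin n, τ i (X j) = if j = i then -X j else X j)
    -- `pd i k` is the odd divided difference operator `∂_{i,k}`
    (pd : Fin n → Fin n → Module.End ℂ (SkewPoly n))
    (hpdi : ∀ i k : Fin n, i ≠ k → pd i k (X i) = 1)
    (hpdk : ∀ i k : Fin n, i ≠ k → pd i k (X k) = 1)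
    (hpd0 : ∀ i k j : Fin n, i ≠ k → j ≠ i → j ≠ k → pd i k (X j) = 0)
    (hpdL : ∀ i k : Fin n, i ≠ k → ∀ (d : ℕ) (f g : SkewPoly n), IsHomog d f →
      pd i k (f * g) = pd i k f * g + (-1 : ℂ) ^ d • (s i k f * pd i k g))
    -- `r i k = ∂_{i,k} ∘ s_{i,k}`
    (r : Fin n → Fin n → Module.End ℂ (SkewPoly n))
    (hr : ∀ i k : Fin n, i ≠ k → r i k = pd i k ∘ₗ (s i k).toLinearMap)
    (i k : Fin n) (hik : i ≠ k) (f : SkewPoly n) :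
    (X i ^ 2 - X k ^ 2) * r i k f
      = (X i - X k) * s i k f - X i * τ i f + X k * τ k f :=
  stmt5_general n s hs τ hτ pd hpdi hpdk hpd0 hpdL r hr i k hik f
end
end

section
/- (Classical Yang–Baxter equation for the operators r_{i,k}.) For all distinct indices a, b, c in {1,…,n}, the operator identity [r_{a,b}, r_{a,c}]₊ + [r_{a,c}, r_{b,c}]₊ + [r_{a,b}, r_{b,c}]₊ = 0 holds on P⁻, where [p,q]₊ = pq + qp denotes the anticommutator. -/
noncomputable section

/-! Since `r_{i,k} 1 = 0` and `r_{i,k} (x_j g) = ε_{i,k}(j) s_{i,k} g - x_j r_{i,k} g`, the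
Yang–Baxter sum at `x_j g` is `x_j` times its value at `g` plus twelve terms `± ε s_Q r_R g`
(`Q`, `R` pairs among `ab, ac, bc`), obtained by moving `s` to the left with the equivariance
`r_{p,q} ∘ s_{i,k} = s_{i,k} ∘ r_{s_{i,k}(p), s_{i,k}(q)}`. These cancel in pairs, and induction on
the number of generators finishes the proof. -/

/-- `ε_{i,k}(j)`, the value of `∂_{i,k}` on the generator `x_j`. -/
def pairIndicator {α : Type*} [DecidableEq α] (i k j : α) : ℂ :=
  if j = i ∨ j = k then 1 else 0

section pairIndicator

variable {α : Type*} [DecidableEq α]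

theorem pairIndicator_comm (i k j : α) : pairIndicator i k j = pairIndicator k i j := by
  simp only [pairIndicator, or_comm]

theorem pairIndicator_swap_apply (i k p q j : α) :
    pairIndicator p q (Equiv.swap i k j)
      = pairIndicator (Equiv.swap i k p) (Equiv.swap i k q) j := by
  simp only [pairIndicator, Equiv.swap_apply_eq_iff]

theorem pairIndicator_swap_apply_self (i k j : α) :
    pairIndicator i k (Equiv.swap i k j) = pairIndicator i k j := by
  rw [pairIndicator_swap_apply, Equiv.swap_apply_left, Equiv.swap_apply_right,
    pairIndicator_comm]

end pairIndicator

theorem Equiv.swap_apply_swap_apply_swap {α : Type*} [DecidableEq α] (i k p q j : α) :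
    Equiv.swap i k (Equiv.swap (Equiv.swap i k p) (Equiv.swap i k q) j)
      = Equiv.swap p q (Equiv.swap i k j) := by
  rw [Equiv.swap_apply_apply, Equiv.swap_inv]
  simp only [Equiv.Perm.mul_apply, Equiv.swap_apply_self]

namespace SkewPoly

variable {n : ℕ}

theorem algHom_ext {A : Type*} [Semiring A] [Algebra ℂ A] {φ ψ : SkewPoly n →ₐ[ℂ] A}
    (h : ∀ j, φ (X j) = ψ (X j)) : φ = ψ :=
  RingQuot.ringQuot_ext' ℂ φ ψ (FreeAlgebra.hom_ext (funext h))

theorem linearMap_ext {M : Type*} [AddCommGroup M] [Module ℂ M] {φ ψ : SkewPoly n →ₗ[ℂ] M}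
    (one : φ 1 = ψ 1) (X_mul : ∀ j g, φ g = ψ g → φ (X j * g) = ψ (X j * g)) : φ = ψ := by
  have mk_mul : ∀ (y : FreeAlgebra ℂ (Fin n)) (g : SkewPoly n), φ g = ψ g →
      φ (RingQuot.mkAlgHom ℂ (SkewRel n) y * g) = ψ (RingQuot.mkAlgHom ℂ (SkewRel n) y * g) := by
    intro y
    induction y using FreeAlgebra.induction with
    | grade0 t =>
      intro g hg
      rw [AlgHom.commutes, Algebra.algebraMap_eq_smul_one, smul_one_mul, map_smul, map_smul, hg]
    | grade1 j => exact X_mul j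
    | add y z hy hz =>
      intro g hg
      rw [map_add, add_mul, map_add, map_add, hy g hg, hz g hg]
    | mul y z hy hz =>
      intro g hg
      rw [map_mul (RingQuot.mkAlgHom ℂ (SkewRel n)) y z, mul_assoc]
      exact hy _ (hz g hg)
  ext f
  obtain ⟨y, rfl⟩ := RingQuot.mkAlgHom_surjective ℂ (SkewRel n) f
  simpa using mk_mul y 1 one

theorem isHomog_one : IsHomog 0 (1 : SkewPoly n) :=
  Submodule.subset_span ⟨[], rfl, rfl⟩

theorem isHomog_X (j : Fin n) : IsHomog 1 (X j) :=
  Submodule.subset_span ⟨[j], rfl, by simp⟩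

end SkewPoly

/-- `s_{i,k}` and `∂_{i,k}`, given by their defining properties. -/
structure OddDividedDifference {n : ℕ} (i k : Fin n) where
  s : SkewPoly n →ₐ[ℂ] SkewPoly n
  pd : Module.End ℂ (SkewPoly n)
  s_X : ∀ j, s (X j) = X (Equiv.swap i k j)
  pd_X_left : pd (X i) = 1
  pd_X_right : pd (X k) = 1
  pd_X_of_ne : ∀ j, j ≠ i → j ≠ k → pd (X j) = 0
  pd_mul : ∀ (d : ℕ) (f g : SkewPoly n), IsHomog d f →
    pd (f * g) = pd f * g + (-1 : ℂ) ^ d • (s f * pd g)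

namespace OddDividedDifference

variable {n : ℕ} {i k : Fin n}

def r (D : OddDividedDifference i k) : Module.End ℂ (SkewPoly n) :=
  D.pd ∘ₗ D.s.toLinearMap

def symm (D : OddDividedDifference i k) : OddDividedDifference k i where
  s := D.s
  pd := D.pd
  s_X j := by rw [D.s_X, Equiv.swap_comm]
  pd_X_left := D.pd_X_right
  pd_X_right := D.pd_X_left
  pd_X_of_ne j hk hi := D.pd_X_of_ne j hi hk
  pd_mul := D.pd_mul

theorem symm_r (D : OddDividedDifference i k) : D.symm.r = D.r := rfl

theorem pd_one (D : OddDividedDifference i k) : D.pd 1 = 0 := by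
  simpa using D.pd_mul 0 1 1 SkewPoly.isHomog_one

theorem pd_X (D : OddDividedDifference i k) (j : Fin n) :
    D.pd (X j) = pairIndicator i k j • 1 := by
  by_cases hi : j = i
  · subst hi; simp [pairIndicator, D.pd_X_left]
  by_cases hk : j = k
  · subst hk; simp [pairIndicator, D.pd_X_right]
  simp [pairIndicator, hi, hk, D.pd_X_of_ne j hi hk]

theorem pd_X_mul (D : OddDividedDifference i k) (j : Fin n) (g : SkewPoly n) :
    D.pd (X j * g) = pairIndicator i k j • g - X (Equiv.swap i k j) * D.pd g := by
  rw [D.pd_mul 1 (X j) g (SkewPoly.isHomog_X j), D.pd_X, D.s_X, smul_one_mul, pow_one]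
  module

theorem r_one (D : OddDividedDifference i k) : D.r 1 = 0 := by
  simp [r, D.pd_one]

theorem r_X_mul (D : OddDividedDifference i k) (j : Fin n) (g : SkewPoly n) :
    D.r (X j * g) = pairIndicator i k j • D.s g - X j * D.r g := by
  simp only [r, LinearMap.comp_apply, AlgHom.toLinearMap_apply, map_mul, D.s_X, D.pd_X_mul,
    pairIndicator_swap_apply_self, Equiv.swap_apply_self]

section conjugation

variable {p q p' q' : Fin n} (D : OddDividedDifference i k) (D₁ : OddDividedDifference p q)
  (D₂ : OddDividedDifference p' q')

theorem s_comp_s (hp : Equiv.swap i k p = p') (hq : Equiv.swap i k q = q') :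
    D₁.s.comp D.s = D.s.comp D₂.s :=
  SkewPoly.algHom_ext fun j => by
    simp only [AlgHom.comp_apply, D.s_X, D₁.s_X, D₂.s_X, ← hp, ← hq,
      Equiv.swap_apply_swap_apply_swap]

theorem r_s_apply (hp : Equiv.swap i k p = p') (hq : Equiv.swap i k q = q') (f : SkewPoly n) :
    D₁.r (D.s f) = D.s (D₂.r f) := by
  have hs : ∀ g, D₁.s (D.s g) = D.s (D₂.s g) := AlgHom.congr_fun (D.s_comp_s D₁ D₂ hp hq)
  have hr : D₁.r ∘ₗ D.s.toLinearMap = D.s.toLinearMap ∘ₗ D₂.r := by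
    refine SkewPoly.linearMap_ext ?_ fun j g hg => ?_
    · simp [r_one]
    · simp only [LinearMap.comp_apply, AlgHom.toLinearMap_apply] at hg ⊢
      rw [map_mul, D.s_X, r_X_mul, r_X_mul, map_sub, map_smul, map_mul, D.s_X, hs, hg,
        pairIndicator_swap_apply, hp, hq]
  exact LinearMap.congr_fun hr f

end conjugation

theorem r_r_X_mul {p q : Fin n} (D : OddDividedDifference i k) (D' : OddDividedDifference p q)
    (j : Fin n) (g : SkewPoly n) :
    D.r (D'.r (X j * g)) = pairIndicator p q j • D.r (D'.s g)
      - pairIndicator i k j • D.s (D'.r g) + X j * D.r (D'.r g) := by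
  rw [D'.r_X_mul, map_sub, map_smul, D.r_X_mul]
  abel

theorem yangBaxter {a b c : Fin n} (Dab : OddDividedDifference a b)
    (Dac : OddDividedDifference a c) (Dbc : OddDividedDifference b c)
    (hab : a ≠ b) (hac : a ≠ c) (hbc : b ≠ c) :
    (Dab.r * Dac.r + Dac.r * Dab.r) + (Dac.r * Dbc.r + Dbc.r * Dac.r)
      + (Dab.r * Dbc.r + Dbc.r * Dab.r) = 0 := by
  refine SkewPoly.linearMap_ext (by simp [r_one]) fun j g ih => ?_
  simp only [LinearMap.add_apply, Module.End.mul_apply, LinearMap.zero_apply] at ih ⊢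
  have swap_ne {x y z : Fin n} (hx : z ≠ x) (hy : z ≠ y) : Equiv.swap x y z = z :=
    Equiv.swap_apply_of_ne_of_ne hx hy
  rw [r_r_X_mul, r_r_X_mul, r_r_X_mul, r_r_X_mul, r_r_X_mul, r_r_X_mul,
    Dac.r_s_apply Dab Dbc.symm (Equiv.swap_apply_left a c) (swap_ne hab.symm hbc),
    Dab.r_s_apply Dac Dbc (Equiv.swap_apply_left a b) (swap_ne hac.symm hbc.symm),
    Dbc.r_s_apply Dac Dab (swap_ne hab hac) (Equiv.swap_apply_right b c),
    Dac.r_s_apply Dbc Dab.symm (swap_ne hab.symm hbc) (Equiv.swap_apply_right a c),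
    Dbc.r_s_apply Dab Dac (swap_ne hab hac) (Equiv.swap_apply_left b c),
    Dab.r_s_apply Dbc Dac (Equiv.swap_apply_right a b) (swap_ne hac.symm hbc.symm),
    symm_r, symm_r]
  have hX := congrArg (X j * ·) ih
  simp only [mul_add, mul_zero] at hX
  rw [← hX]
  module

end OddDividedDifference

theorem stmt6_general (n : ℕ)
    -- `s i k` is the algebra automorphism of `P⁻` swapping `xᵢ` and `x_k`
    (s : Fin n → Fin n → (SkewPoly n →ₐ[ℂ] SkewPoly n))
    (hs : ∀ i k j : Fin n, i ≠ k → s i k (X j) = X (Equiv.swap i k j))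
    -- `pd i k` is the odd divided difference operator `∂_{i,k}`
    (pd : Fin n → Fin n → Module.End ℂ (SkewPoly n))
    (hpdi : ∀ i k : Fin n, i ≠ k → pd i k (X i) = 1)
    (hpdk : ∀ i k : Fin n, i ≠ k → pd i k (X k) = 1)
    (hpd0 : ∀ i k j : Fin n, i ≠ k → j ≠ i → j ≠ k → pd i k (X j) = 0)
    (hpdL : ∀ i k : Fin n, i ≠ k → ∀ (d : ℕ) (f g : SkewPoly n), IsHomog d f →
      pd i k (f * g) = pd i k f * g + (-1 : ℂ) ^ d • (s i k f * pd i k g))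
    -- `r i k = ∂_{i,k} ∘ s_{i,k}`
    (r : Fin n → Fin n → Module.End ℂ (SkewPoly n))
    (hr : ∀ i k : Fin n, i ≠ k → r i k = pd i k ∘ₗ (s i k).toLinearMap)
    (a b c : Fin n) (hab : a ≠ b) (hac : a ≠ c) (hbc : b ≠ c) :
    (r a b * r a c + r a c * r a b) + (r a c * r b c + r b c * r a c)
      + (r a b * r b c + r b c * r a b) = 0 := by
  let D (i k : Fin n) (hik : i ≠ k) : OddDividedDifference i k :=
    ⟨s i k, pd i k, fun j => hs i k j hik, hpdi i k hik, hpdk i k hik, fun j => hpd0 i k j hik,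
      hpdL i k hik⟩
  rw [hr a b hab, hr a c hac, hr b c hbc]
  exact (D a b hab).yangBaxter (D a c hac) (D b c hbc) hab hac hbc

/-- The classical Yang–Baxter equation for the operators `r_{i,k}`:
`[r_{a,b}, r_{a,c}]₊ + [r_{a,c}, r_{b,c}]₊ + [r_{a,b}, r_{b,c}]₊ = 0` for distinct `a, b, c`. -/
theorem stmt6 (n : ℕ) (hn : 2 ≤ n)
    -- `s i k` is the algebra automorphism of `P⁻` swapping `xᵢ` and `x_k`
    (s : Fin n → Fin n → (SkewPoly n →ₐ[ℂ] SkewPoly n))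
    (hs : ∀ i k j : Fin n, i ≠ k → s i k (X j) = X (Equiv.swap i k j))
    -- `pd i k` is the odd divided difference operator `∂_{i,k}`
    (pd : Fin n → Fin n → Module.End ℂ (SkewPoly n))
    (hpdi : ∀ i k : Fin n, i ≠ k → pd i k (X i) = 1)
    (hpdk : ∀ i k : Fin n, i ≠ k → pd i k (X k) = 1)
    (hpd0 : ∀ i k j : Fin n, i ≠ k → j ≠ i → j ≠ k → pd i k (X j) = 0)
    (hpdL : ∀ i k : Fin n, i ≠ k → ∀ (d : ℕ) (f g : SkewPoly n), IsHomog d f →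
      pd i k (f * g) = pd i k f * g + (-1 : ℂ) ^ d • (s i k f * pd i k g))
    -- `r i k = ∂_{i,k} ∘ s_{i,k}`
    (r : Fin n → Fin n → Module.End ℂ (SkewPoly n))
    (hr : ∀ i k : Fin n, i ≠ k → r i k = pd i k ∘ₗ (s i k).toLinearMap)
    (a b c : Fin n) (hab : a ≠ b) (hac : a ≠ c) (hbc : b ≠ c) :
    (r a b * r a c + r a c * r a b) + (r a c * r b c + r b c * r a c)
      + (r a b * r b c + r b c * r a b) = 0 :=
  stmt6_general n s hs pd hpdi hpdk hpd0 hpdL r hr a b c hab hac hbc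
end
end

section
/- The relation Σ_{i=1}^n (A_i B_i + B_i A_i) = 0 holds as an identity of operators on the skew Laurent polynomial ring P⁻ₗ. -/
noncomputable section

/-- The defining relations of the skew Laurent polynomial ring `P⁻ₗ`: the generators indexed by
`Sum.inl i` are the `xᵢ` and those indexed by `Sum.inr i` are the `xᵢ⁻¹`; generators with distinct
underlying indices anticommute, and `xᵢ xᵢ⁻¹ = xᵢ⁻¹ xᵢ = 1`. -/
inductive SkewLRel (n : ℕ) :
    FreeAlgebra ℂ (Fin n ⊕ Fin n) → FreeAlgebra ℂ (Fin n ⊕ Fin n) → Prop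
  | anticomm (a b : Fin n ⊕ Fin n) (h : Sum.elim id id a ≠ Sum.elim id id b) :
      SkewLRel n (FreeAlgebra.ι ℂ a * FreeAlgebra.ι ℂ b)
        (-(FreeAlgebra.ι ℂ b * FreeAlgebra.ι ℂ a))
  | mulInv (i : Fin n) :
      SkewLRel n (FreeAlgebra.ι ℂ (Sum.inl i) * FreeAlgebra.ι ℂ (Sum.inr i)) 1
  | invMul (i : Fin n) :
      SkewLRel n (FreeAlgebra.ι ℂ (Sum.inr i) * FreeAlgebra.ι ℂ (Sum.inl i)) 1

/-- The skew Laurent polynomial ring `P⁻ₗ`. -/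
abbrev SkewLaurent (n : ℕ) := RingQuot (SkewLRel n)

/-- The generator `xᵢ` of `P⁻ₗ`. -/
def XL {n : ℕ} (i : Fin n) : SkewLaurent n :=
  RingQuot.mkAlgHom ℂ (SkewLRel n) (FreeAlgebra.ι ℂ (Sum.inl i))

/-- The generator `xᵢ⁻¹` of `P⁻ₗ`. -/
def XLinv {n : ℕ} (i : Fin n) : SkewLaurent n :=
  RingQuot.mkAlgHom ℂ (SkewLRel n) (FreeAlgebra.ι ℂ (Sum.inr i))

/-- The generators of `P⁻ₗ`, as a family indexed by `Fin n ⊕ Fin n`. -/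
def genL {n : ℕ} : Fin n ⊕ Fin n → SkewLaurent n := Sum.elim XL XLinv

/-- The (ℤ-valued) degree of a word in the generators of `P⁻ₗ`: each `xᵢ` counts `+1` and each
`xᵢ⁻¹` counts `−1`. -/
def degL {n : ℕ} (w : List (Fin n ⊕ Fin n)) : ℤ :=
  (w.map (Sum.elim (fun _ => (1 : ℤ)) fun _ => (-1 : ℤ))).sum

/-- `f ∈ P⁻ₗ` is homogeneous of degree `d ∈ ℤ`. -/
def IsHomogL {n : ℕ} (d : ℤ) (f : SkewLaurent n) : Prop :=
  f ∈ Submodule.span ℂ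
    {m : SkewLaurent n | ∃ w : List (Fin n ⊕ Fin n), degL w = d ∧ m = (w.map genL).prod}

/-- The operator of left multiplication by `xᵢ⁻¹` on `P⁻ₗ`. -/
def mulXLinv {n : ℕ} (i : Fin n) : Module.End ℂ (SkewLaurent n) :=
  LinearMap.mulLeft ℂ (XLinv i)

/-!
Write `T = Σᵢ (AᵢBᵢ + BᵢAᵢ)`. Moving a generator `x_j` to the left through the operators uses
`Aᵢ(x_j u) = −x_j Aᵢ u` for `j ≠ i`, `Aᵢ(xᵢ u) = ½(1 + τᵢ) u`, `xᵢ Aᵢ u = ½(1 − τᵢ) u` and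
`r_{i,k}(x_j u) = [j ∈ {i, k}] s_{i,k} u − x_j r_{i,k} u`. The result is
`T(x_j u) = x_j T u` plus the correction terms `s_{ij}(A_j u) − s_{ij}(Aᵢ u)` (from `i ≠ j`) and
`Σ_k (s_{jk}(A_k u) − s_{jk}(A_j u))` (from `i = j`, where the two halves `½(1 ± τ_j)` recombine),
which cancel since `s_{ij} = s_{ji}` and `s_{ij} Aᵢ = A_j s_{ij}`. As the `x_j` are units generating
`P⁻ₗ`, `T` commutes with all left multiplications, so `T u = u · T 1 = 0`.
-/

open Finset

section OddEvenParts

variable {M : Type*} [AddCommGroup M] [Module ℂ M] (t : Module.End ℂ M)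

def oddPart : Module.End ℂ M := (2 : ℂ)⁻¹ • (1 - t)

def evenPart : Module.End ℂ M := (2 : ℂ)⁻¹ • (1 + t)

theorem oddPart_add_evenPart_apply (u : M) : oddPart t u + evenPart t u = u := by
  rw [← LinearMap.add_apply, oddPart, evenPart, ← smul_add, sub_add_add_cancel, ← two_smul ℂ,
    smul_smul, inv_mul_cancel₀ two_ne_zero, one_smul, Module.End.one_apply]

end OddEvenParts

namespace SkewLaurent

variable {n : ℕ}

section Generators

/- `rw [neg_mul]` fails on `SkewLaurent n`: its multiplication is built from
`FreeAlgebra.instSemiring`, its negation from `FreeAlgebra.instRing`, and the two only agree up to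
unfolding, so these instances of the general lemmas are proved by unification instead. -/
protected theorem neg_mul (a b : SkewLaurent n) : -a * b = -(a * b) := neg_mul a b

protected theorem neg_one_smul (a : SkewLaurent n) : (-1 : ℂ) • a = -a := neg_one_smul ℂ a

theorem XL_mul_XLinv (i : Fin n) : XL i * XLinv i = 1 := by
  have h := RingQuot.mkAlgHom_rel ℂ (SkewLRel.mulInv i)
  rwa [map_mul, map_one] at h

theorem XLinv_mul_XL (i : Fin n) : XLinv i * XL i = 1 := by
  have h := RingQuot.mkAlgHom_rel ℂ (SkewLRel.invMul i)
  rwa [map_mul, map_one] at h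

theorem XLinv_mul_XL_of_ne {i j : Fin n} (h : i ≠ j) : XLinv i * XL j = -(XL j * XLinv i) := by
  have h := RingQuot.mkAlgHom_rel ℂ (SkewLRel.anticomm (Sum.inr i) (Sum.inl j) h)
  rwa [map_mul, map_neg, map_mul] at h

theorem isHomogL_XL (j : Fin n) : IsHomogL 1 (XL j) :=
  Submodule.subset_span ⟨[Sum.inl j], by simp [degL], by simp [genL]⟩

theorem isHomogL_one : IsHomogL 0 (1 : SkewLaurent n) :=
  Submodule.subset_span ⟨[], by simp [degL], by simp⟩

theorem algHom_ext {B : Type*} [Semiring B] [Algebra ℂ B] {f g : SkewLaurent n →ₐ[ℂ] B}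
    (hX : ∀ j, f (XL j) = g (XL j)) (hXinv : ∀ j, f (XLinv j) = g (XLinv j)) : f = g :=
  RingQuot.ringQuot_ext' ℂ f g <| FreeAlgebra.hom_ext <| funext <| by
    rintro (j | j)
    exacts [hX j, hXinv j]

theorem eq_mulRight_of_map_XL_mul (T : Module.End ℂ (SkewLaurent n))
    (hT : ∀ j u, T (XL j * u) = XL j * T u) : T = LinearMap.mulRight ℂ (T 1) := by
  have hTinv : ∀ j u, T (XLinv j * u) = XLinv j * T u := fun j u =>
    calc T (XLinv j * u) = XLinv j * (XL j * T (XLinv j * u)) := by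
          rw [← mul_assoc, XLinv_mul_XL, one_mul]
      _ = XLinv j * T u := by rw [← hT, ← mul_assoc, XL_mul_XLinv, one_mul]
  have hmk : ∀ y u, T (RingQuot.mkAlgHom ℂ (SkewLRel n) y * u)
      = RingQuot.mkAlgHom ℂ (SkewLRel n) y * T u := by
    intro y
    induction y using FreeAlgebra.induction with
    | grade0 c => intro u; simp [← Algebra.smul_def]
    | grade1 a => rcases a with j | j; exacts [hT j, hTinv j]
    | mul x y hx hy => intro u; rw [map_mul (RingQuot.mkAlgHom ℂ _), mul_assoc, mul_assoc, hx, hy]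
    | add x y hx hy =>
      intro u; rw [map_add (RingQuot.mkAlgHom ℂ _), add_mul, add_mul, map_add, hx, hy]
  refine LinearMap.ext fun u => ?_
  obtain ⟨y, rfl⟩ := RingQuot.mkAlgHom_surjective ℂ (SkewLRel n) u
  simpa using hmk y 1

end Generators

section Automorphisms

def IsSwapHom (i k : Fin n) (σ : SkewLaurent n →ₐ[ℂ] SkewLaurent n) : Prop :=
  ∀ j, σ (XL j) = XL (Equiv.swap i k j) ∧ σ (XLinv j) = XLinv (Equiv.swap i k j)

def IsSignFlipHom (i : Fin n) (τ : SkewLaurent n →ₐ[ℂ] SkewLaurent n) : Prop :=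
  ∀ j, τ (XL j) = (if j = i then -XL j else XL j) ∧
    τ (XLinv j) = (if j = i then -XLinv j else XLinv j)

def IsOddSkewDerivation (σ : SkewLaurent n →ₐ[ℂ] SkewLaurent n)
    (D : Module.End ℂ (SkewLaurent n)) : Prop :=
  ∀ (d : ℤ) (f g : SkewLaurent n), IsHomogL d f → D (f * g) = D f * g + (-1 : ℂ) ^ d • (σ f * D g)

variable {i k j : Fin n} {σ σ' τ τ' : SkewLaurent n →ₐ[ℂ] SkewLaurent n}
  {D : Module.End ℂ (SkewLaurent n)}

theorem IsSwapHom.symm (hσ : IsSwapHom i k σ) : IsSwapHom k i σ := by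
  simpa only [IsSwapHom, Equiv.swap_comm] using hσ

theorem IsSwapHom.unique (hσ : IsSwapHom i k σ) (hσ' : IsSwapHom i k σ') : σ = σ' :=
  algHom_ext (fun j => (hσ j).1.trans (hσ' j).1.symm) fun j => (hσ j).2.trans (hσ' j).2.symm

theorem IsSwapHom.apply_apply_XL (hσ : IsSwapHom i k σ) (j : Fin n) : σ (σ (XL j)) = XL j := by
  rw [(hσ j).1, (hσ _).1, Equiv.swap_apply_self]

theorem IsSwapHom.comp_signFlip (hσ : IsSwapHom i k σ) (hτ : IsSignFlipHom i τ)
    (hτ' : IsSignFlipHom k τ') : σ.comp τ = τ'.comp σ := by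
  have hswap : ∀ j, Equiv.swap i k j = k ↔ j = i := fun j => by
    rw [Equiv.swap_apply_eq_iff, Equiv.swap_apply_right]
  refine algHom_ext (fun j => ?_) fun j => ?_
  · simp only [AlgHom.comp_apply, (hτ j).1, (hσ j).1, (hτ' _).1, hswap]
    split_ifs <;> simp [(hσ j).1]
  · simp only [AlgHom.comp_apply, (hτ j).2, (hσ j).2, (hτ' _).2, hswap]
    split_ifs <;> simp [(hσ j).2]

theorem IsOddSkewDerivation.map_one (hD : IsOddSkewDerivation σ D) : D 1 = 0 := by
  simpa using hD 0 1 1 isHomogL_one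

theorem IsOddSkewDerivation.map_XL_mul (hD : IsOddSkewDerivation σ D) (j : Fin n)
    (u : SkewLaurent n) : D (XL j * u) = D (XL j) * u - σ (XL j) * D u := by
  rw [hD 1 _ u (isHomogL_XL j), zpow_one, SkewLaurent.neg_one_smul, sub_eq_add_neg]

theorem IsOddSkewDerivation.apply_swap_XL_mul (hσ : IsSwapHom i k σ)
    (hD : IsOddSkewDerivation σ D) (hDX : ∀ j, D (XL j) = if j = i ∨ j = k then 1 else 0)
    (j : Fin n) (u : SkewLaurent n) :
    D (σ (XL j * u)) = (if j = i ∨ j = k then σ u else 0) - XL j * D (σ u) := by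
  have hcond : (Equiv.swap i k j = i ∨ Equiv.swap i k j = k) ↔ (j = i ∨ j = k) := by
    rw [Equiv.swap_apply_eq_iff, Equiv.swap_apply_eq_iff, Equiv.swap_apply_left,
      Equiv.swap_apply_right, or_comm]
  rw [map_mul, (hσ j).1, hD.map_XL_mul, hDX, ← (hσ j).1, hσ.apply_apply_XL]
  simp only [hcond]
  split_ifs <;> simp

theorem oddPart_XL_mul_of_ne (hτ : IsSignFlipHom i τ) (hj : j ≠ i) (u : SkewLaurent n) :
    oddPart τ.toLinearMap (XL j * u) = XL j * oddPart τ.toLinearMap u := by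
  simp [oddPart, (hτ j).1, hj, mul_sub]

theorem oddPart_XL_mul_self (hτ : IsSignFlipHom i τ) (u : SkewLaurent n) :
    oddPart τ.toLinearMap (XL i * u) = XL i * evenPart τ.toLinearMap u := by
  simp [oddPart, evenPart, (hτ i).1, mul_add, SkewLaurent.neg_mul]

def opA (i : Fin n) (τ : SkewLaurent n →ₐ[ℂ] SkewLaurent n) : Module.End ℂ (SkewLaurent n) :=
  mulXLinv i * oddPart τ.toLinearMap

theorem opA_apply (u : SkewLaurent n) : opA i τ u = XLinv i * oddPart τ.toLinearMap u := rfl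

theorem opA_one : opA i τ 1 = 0 := by
  simp [opA_apply, oddPart]

theorem XL_mul_opA (u : SkewLaurent n) : XL i * opA i τ u = oddPart τ.toLinearMap u := by
  rw [opA_apply, ← mul_assoc, XL_mul_XLinv, one_mul]

theorem opA_XL_mul_of_ne (hτ : IsSignFlipHom i τ) (hj : j ≠ i) (u : SkewLaurent n) :
    opA i τ (XL j * u) = -(XL j * opA i τ u) := by
  rw [opA_apply, oddPart_XL_mul_of_ne hτ hj, ← mul_assoc, XLinv_mul_XL_of_ne hj.symm,
    SkewLaurent.neg_mul, mul_assoc, opA_apply]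

theorem opA_XL_mul_self (hτ : IsSignFlipHom i τ) (u : SkewLaurent n) :
    opA i τ (XL i * u) = evenPart τ.toLinearMap u := by
  rw [opA_apply, oddPart_XL_mul_self hτ, ← mul_assoc, XLinv_mul_XL, one_mul]

theorem IsSwapHom.map_opA (hσ : IsSwapHom i k σ) (hτ : IsSignFlipHom i τ)
    (hτ' : IsSignFlipHom k τ') (u : SkewLaurent n) : σ (opA i τ u) = opA k τ' (σ u) := by
  have hcomm : σ (τ u) = τ' (σ u) := AlgHom.congr_fun (hσ.comp_signFlip hτ hτ') u
  simp [opA_apply, oddPart, (hσ i).2, hcomm]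

end Automorphisms

section Operators

variable {s : Fin n → Fin n → (SkewLaurent n →ₐ[ℂ] SkewLaurent n)}
  {τ : Fin n → (SkewLaurent n →ₐ[ℂ] SkewLaurent n)}
  {pd : Fin n → Fin n → Module.End ℂ (SkewLaurent n)}

def opB (s : Fin n → Fin n → (SkewLaurent n →ₐ[ℂ] SkewLaurent n))
    (pd : Fin n → Fin n → Module.End ℂ (SkewLaurent n)) (i : Fin n) :
    Module.End ℂ (SkewLaurent n) :=
  ∑ k ∈ univ \ {i}, pd i k ∘ₗ (s i k).toLinearMap

structure IsOddDividedDifferenceSystem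
    (s : Fin n → Fin n → (SkewLaurent n →ₐ[ℂ] SkewLaurent n))
    (τ : Fin n → (SkewLaurent n →ₐ[ℂ] SkewLaurent n))
    (pd : Fin n → Fin n → Module.End ℂ (SkewLaurent n)) : Prop where
  swap : ∀ i k, i ≠ k → IsSwapHom i k (s i k)
  signFlip : ∀ i, IsSignFlipHom i (τ i)
  oddSkewDerivation : ∀ i k, i ≠ k → IsOddSkewDerivation (s i k) (pd i k)
  apply_XL : ∀ i k, i ≠ k → ∀ j, pd i k (XL j) = if j = i ∨ j = k then 1 else 0

theorem opB_one (h : IsOddDividedDifferenceSystem s τ pd) (i : Fin n) : opB s pd i 1 = 0 := by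
  simp only [opB, LinearMap.sum_apply, LinearMap.comp_apply, AlgHom.toLinearMap_apply, map_one]
  refine sum_eq_zero fun k hk => (h.oddSkewDerivation i k ?_).map_one
  simpa [eq_comm] using hk

theorem opB_XL_mul (h : IsOddDividedDifferenceSystem s τ pd) (i j : Fin n) (u : SkewLaurent n) :
    opB s pd i (XL j * u)
      = ∑ k ∈ univ \ {i}, (if j = i ∨ j = k then s i k u else 0) - XL j * opB s pd i u := by
  simp only [opB, LinearMap.sum_apply, LinearMap.comp_apply, AlgHom.toLinearMap_apply, mul_sum,
    ← sum_sub_distrib]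
  refine sum_congr rfl fun k hk => ?_
  have hik : i ≠ k := by simpa [eq_comm] using hk
  exact (h.oddSkewDerivation i k hik).apply_swap_XL_mul (h.swap i k hik) (h.apply_XL i k hik) j u

theorem opB_XL_mul_self (h : IsOddDividedDifferenceSystem s τ pd) (i : Fin n)
    (u : SkewLaurent n) :
    opB s pd i (XL i * u) = ∑ k ∈ univ \ {i}, s i k u - XL i * opB s pd i u := by
  simp [opB_XL_mul h]

theorem opB_XL_mul_of_ne (h : IsOddDividedDifferenceSystem s τ pd) {i j : Fin n} (hij : i ≠ j)
    (u : SkewLaurent n) : opB s pd i (XL j * u) = s i j u - XL j * opB s pd i u := by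
  simp [opB_XL_mul h, hij.symm]

def anticommAB (s : Fin n → Fin n → (SkewLaurent n →ₐ[ℂ] SkewLaurent n))
    (τ : Fin n → (SkewLaurent n →ₐ[ℂ] SkewLaurent n))
    (pd : Fin n → Fin n → Module.End ℂ (SkewLaurent n)) (i : Fin n) :
    Module.End ℂ (SkewLaurent n) :=
  opA i (τ i) * opB s pd i + opB s pd i * opA i (τ i)

theorem anticommAB_XL_mul_of_ne (h : IsOddDividedDifferenceSystem s τ pd) {i j : Fin n}
    (hij : i ≠ j) (u : SkewLaurent n) :
    anticommAB s τ pd i (XL j * u) = XL j * anticommAB s τ pd i u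
      + (s i j (opA j (τ j) u) - s i j (opA i (τ i) u)) := by
  have hAs : opA i (τ i) (s i j u) = s i j (opA j (τ j) u) :=
    ((h.swap i j hij).symm.map_opA (h.signFlip j) (h.signFlip i) u).symm
  simp only [anticommAB, LinearMap.add_apply, Module.End.mul_apply]
  rw [opB_XL_mul_of_ne h hij, map_sub, hAs, opA_XL_mul_of_ne (h.signFlip i) hij.symm,
    opA_XL_mul_of_ne (h.signFlip i) hij.symm, map_neg, opB_XL_mul_of_ne h hij, mul_add]
  abel

theorem anticommAB_XL_mul_self (h : IsOddDividedDifferenceSystem s τ pd) (i : Fin n)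
    (u : SkewLaurent n) :
    anticommAB s τ pd i (XL i * u) = XL i * anticommAB s τ pd i u
      + ∑ k ∈ univ \ {i}, (s i k (opA k (τ k) u) - s i k (opA i (τ i) u)) := by
  set A := opA i (τ i)
  set B := opB s pd i
  have hAs : ∀ k ∈ univ \ {i}, A (s i k u) = s i k (opA k (τ k) u) := fun k hk =>
    ((h.swap i k (by simpa [eq_comm] using hk)).symm.map_opA (h.signFlip k) (h.signFlip i) u).symm
  have hXBA :
      XL i * B (A u) = ∑ k ∈ univ \ {i}, s i k (A u) - B (oddPart (τ i).toLinearMap u) := by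
    rw [← XL_mul_opA, opB_XL_mul_self h]
    abel
  have hE : ∀ v, evenPart (τ i).toLinearMap v = v - oddPart (τ i).toLinearMap v := fun v =>
    eq_sub_of_add_eq' (oddPart_add_evenPart_apply _ v)
  simp only [anticommAB, LinearMap.add_apply, Module.End.mul_apply]
  rw [opB_XL_mul_self h, map_sub, map_sum, sum_congr rfl hAs, opA_XL_mul_self (h.signFlip i),
    opA_XL_mul_self (h.signFlip i), mul_add, XL_mul_opA, hXBA, hE, hE, map_sub, sum_sub_distrib]
  abel

theorem sum_anticommAB_XL_mul (h : IsOddDividedDifferenceSystem s τ pd) (j : Fin n)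
    (u : SkewLaurent n) :
    ∑ i, anticommAB s τ pd i (XL j * u) = XL j * ∑ i, anticommAB s τ pd i u := by
  have hne : ∀ i ∈ univ \ {j}, i ≠ j := fun i hi => by simpa using hi
  have hcancel : ∑ k ∈ univ \ {j}, (s j k (opA k (τ k) u) - s j k (opA j (τ j) u))
      + ∑ i ∈ univ \ {j}, (s i j (opA j (τ j) u) - s i j (opA i (τ i) u)) = 0 := by
    rw [← sum_add_distrib]
    refine sum_eq_zero fun i hi => ?_
    rw [(h.swap i j (hne i hi)).unique (h.swap j i (hne i hi).symm).symm]
    abel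
  rw [sum_eq_add_sum_sdiff_singleton_of_mem (mem_univ j),
    sum_eq_add_sum_sdiff_singleton_of_mem (mem_univ j), anticommAB_XL_mul_self h,
    sum_congr rfl fun i hi => anticommAB_XL_mul_of_ne h (hne i hi) u, sum_add_distrib, mul_add,
    mul_sum, add_add_add_comm, hcancel, add_zero]

theorem sum_anticommAB_eq_zero (h : IsOddDividedDifferenceSystem s τ pd) :
    ∑ i, anticommAB s τ pd i = 0 := by
  have hT := eq_mulRight_of_map_XL_mul (∑ i, anticommAB s τ pd i) fun j u => by
    simpa only [LinearMap.sum_apply] using sum_anticommAB_XL_mul h j u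
  have hT1 : (∑ i, anticommAB s τ pd i) 1 = 0 := by
    simp [anticommAB, opA_one, opB_one h]
  rw [hT, hT1, LinearMap.mulRight_zero_eq_zero]

end Operators

end SkewLaurent

theorem stmt9_general (n : ℕ)
    -- `s i k` is the algebra automorphism of `P⁻ₗ` swapping `xᵢ` and `x_k` (and `xᵢ⁻¹`, `x_k⁻¹`)
    (s : Fin n → Fin n → (SkewLaurent n →ₐ[ℂ] SkewLaurent n))
    (hs : ∀ i k j : Fin n, i ≠ k → s i k (XL j) = XL (Equiv.swap i k j))
    (hs' : ∀ i k j : Fin n, i ≠ k → s i k (XLinv j) = XLinv (Equiv.swap i k j))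
    -- `τ i` is the algebra automorphism sending `xᵢ` to `-xᵢ` (hence `xᵢ⁻¹` to `-xᵢ⁻¹`)
    (τ : Fin n → (SkewLaurent n →ₐ[ℂ] SkewLaurent n))
    (hτ : ∀ i j : Fin n, τ i (XL j) = if j = i then -XL j else XL j)
    (hτ' : ∀ i j : Fin n, τ i (XLinv j) = if j = i then -XLinv j else XLinv j)
    -- `pd i k` is the extension to `P⁻ₗ` of the odd divided difference operator `∂_{i,k}`
    (pd : Fin n → Fin n → Module.End ℂ (SkewLaurent n))
    (hpdi : ∀ i k : Fin n, i ≠ k → pd i k (XL i) = 1)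
    (hpdk : ∀ i k : Fin n, i ≠ k → pd i k (XL k) = 1)
    (hpd0 : ∀ i k j : Fin n, i ≠ k → j ≠ i → j ≠ k → pd i k (XL j) = 0)
    (hpdL : ∀ i k : Fin n, i ≠ k → ∀ (d : ℤ) (f g : SkewLaurent n), IsHomogL d f →
      pd i k (f * g) = pd i k f * g + (-1 : ℂ) ^ d • (s i k f * pd i k g))
    -- `r i k = ∂_{i,k} ∘ s_{i,k}`
    (r : Fin n → Fin n → Module.End ℂ (SkewLaurent n))
    (hr : ∀ i k : Fin n, i ≠ k → r i k = pd i k ∘ₗ (s i k).toLinearMap)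
    -- `A i = (2xᵢ)⁻¹(1 − τᵢ)` and `B i = Σ_{k ≠ i} r_{i,k}`
    (A B : Fin n → Module.End ℂ (SkewLaurent n))
    (hA : ∀ i : Fin n, A i = (2 : ℂ)⁻¹ • (mulXLinv i * (1 - (τ i).toLinearMap)))
    (hB : ∀ i : Fin n, B i = ∑ k ∈ Finset.univ \ {i}, r i k)
 :
    ∑ i : Fin n, (A i * B i + B i * A i) = 0 := by
  have hpdXL : ∀ i k, i ≠ k → ∀ j, pd i k (XL j) = if j = i ∨ j = k then 1 else 0 := by
    intro i k hik j
    by_cases hji : j = i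
    · simp [hji, hpdi i k hik]
    by_cases hjk : j = k
    · simp [hjk, hpdk i k hik]
    simp [hji, hjk, hpd0 i k j hik hji hjk]
  have hsystem : SkewLaurent.IsOddDividedDifferenceSystem s τ pd :=
    ⟨fun i k hik j => ⟨hs i k j hik, hs' i k j hik⟩, fun i j => ⟨hτ i j, hτ' i j⟩, hpdL, hpdXL⟩
  have hA' : A = fun i => SkewLaurent.opA i (τ i) :=
    funext fun i => by rw [hA, SkewLaurent.opA, oddPart, mul_smul_comm]
  have hB' : B = SkewLaurent.opB s pd :=
    funext fun i => (hB i).trans <| sum_congr rfl fun k hk => hr i k (by simpa [eq_comm] using hk)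
  subst hA' hB'
  exact SkewLaurent.sum_anticommAB_eq_zero hsystem

/-- The relation `Σᵢ (AᵢBᵢ + BᵢAᵢ) = 0` as operators on the skew Laurent polynomial ring. -/
theorem stmt9 (n : ℕ) (hn : 2 ≤ n)
    -- `s i k` is the algebra automorphism of `P⁻ₗ` swapping `xᵢ` and `x_k` (and `xᵢ⁻¹`, `x_k⁻¹`)
    (s : Fin n → Fin n → (SkewLaurent n →ₐ[ℂ] SkewLaurent n))
    (hs : ∀ i k j : Fin n, i ≠ k → s i k (XL j) = XL (Equiv.swap i k j))
    (hs' : ∀ i k j : Fin n, i ≠ k → s i k (XLinv j) = XLinv (Equiv.swap i k j))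
    -- `τ i` is the algebra automorphism sending `xᵢ` to `-xᵢ` (hence `xᵢ⁻¹` to `-xᵢ⁻¹`)
    (τ : Fin n → (SkewLaurent n →ₐ[ℂ] SkewLaurent n))
    (hτ : ∀ i j : Fin n, τ i (XL j) = if j = i then -XL j else XL j)
    (hτ' : ∀ i j : Fin n, τ i (XLinv j) = if j = i then -XLinv j else XLinv j)
    -- `pd i k` is the extension to `P⁻ₗ` of the odd divided difference operator `∂_{i,k}`
    (pd : Fin n → Fin n → Module.End ℂ (SkewLaurent n))
    (hpdi : ∀ i k : Fin n, i ≠ k → pd i k (XL i) = 1)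
    (hpdk : ∀ i k : Fin n, i ≠ k → pd i k (XL k) = 1)
    (hpd0 : ∀ i k j : Fin n, i ≠ k → j ≠ i → j ≠ k → pd i k (XL j) = 0)
    (hpdL : ∀ i k : Fin n, i ≠ k → ∀ (d : ℤ) (f g : SkewLaurent n), IsHomogL d f →
      pd i k (f * g) = pd i k f * g + (-1 : ℂ) ^ d • (s i k f * pd i k g))
    -- `r i k = ∂_{i,k} ∘ s_{i,k}`
    (r : Fin n → Fin n → Module.End ℂ (SkewLaurent n))
    (hr : ∀ i k : Fin n, i ≠ k → r i k = pd i k ∘ₗ (s i k).toLinearMap)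
    -- `A i = (2xᵢ)⁻¹(1 − τᵢ)` and `B i = Σ_{k ≠ i} r_{i,k}`
    (A B : Fin n → Module.End ℂ (SkewLaurent n))
    (hA : ∀ i : Fin n, A i = (2 : ℂ)⁻¹ • (mulXLinv i * (1 - (τ i).toLinearMap)))
    (hB : ∀ i : Fin n, B i = ∑ k ∈ Finset.univ \ {i}, r i k)
 :
    ∑ i : Fin n, (A i * B i + B i * A i) = 0 :=
  stmt9_general n s hs hs' τ hτ hτ' pd hpdi hpdk hpd0 hpdL r hr A B hA hB
end
end

section
/- The operator S = Σ_{i=1}^n Σ_{k ≠ i} s_{i,k} commutes with Δ: S ∘ Δ = Δ ∘ S as operators on P⁻. -/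
noncomputable section

/-!
Each swap `s_{i,k}` intertwines the Dunkl-type operators: `s_{i,k} D_j = D_{s_{i,k}(j)} s_{i,k}`.
For `p_j` and `∂_{j,m}` this holds because both operators are determined by their value at `1`
and a twisted Leibniz rule for left multiplication by a generator `x_a`, and conjugating by
`s_{i,k}` relabels the indices of that rule. Since `s_{i,k}` permutes the `D_j`, it commutes
with `Σ_j D_j²`, hence with `Δ`, and summing over `(i, k)` gives `[S, Δ] = 0`.
-/

open Finset Function

theorem SemiconjBy.finset_sum_right {R ι : Type*} [NonUnitalNonAssocSemiring R] {a : R}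
    {s : Finset ι} {x y : ι → R} (h : ∀ i ∈ s, SemiconjBy a (x i) (y i)) :
    SemiconjBy a (∑ i ∈ s, x i) (∑ i ∈ s, y i) := by
  simp only [SemiconjBy, mul_sum, sum_mul]
  exact sum_congr rfl h

theorem commute_sum_pow_of_semiconjBy {R ι : Type*} [Semiring R] [Fintype ι] (π : Equiv.Perm ι)
    {a : R} {x : ι → R} (h : ∀ i, SemiconjBy a (x i) (x (π i))) (k : ℕ) :
    Commute a (∑ i, x i ^ k) := by
  have := SemiconjBy.finset_sum_right fun i (_ : i ∈ univ) => (h i).pow_right k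
  rwa [Equiv.sum_comp π (fun i => x i ^ k)] at this

section Signs

variable {R : Type*} [CommRing R]

theorem neg_one_pow_mul_self (k : ℕ) : (-1 : R) ^ k * (-1) ^ k = 1 := by
  rw [← mul_pow]
  simp

variable {ι : Type*} [LinearOrder ι] [LocallyFiniteOrderBot ι] [DecidableEq ι]

theorem sum_Iio_update_of_not_lt {M : Type*} [AddCommMonoid M] {b c : ι} (h : ¬c < b)
    (f : ι → M) (v : M) : ∑ l ∈ Iio b, update f c v l = ∑ l ∈ Iio b, f l :=
  sum_congr rfl fun l hl => update_of_ne (by rintro rfl; exact h (mem_Iio.1 hl)) _ _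

theorem neg_one_pow_sum_Iio_update_of_lt {b c : ι} (h : c < b) (f : ι → ℕ) (v : ℕ) :
    (-1 : R) ^ (∑ l ∈ Iio b, update f c v l) =
      (-1) ^ (∑ l ∈ Iio b, f l) * (-1) ^ f c * (-1) ^ v := by
  have hc : c ∈ Iio b := mem_Iio.2 h
  have hsum : ∑ l ∈ Iio b, update f c v l + f c = ∑ l ∈ Iio b, f l + v := by
    rw [sum_update_of_mem hc, ← add_sum_erase _ _ hc, sdiff_singleton_eq_erase]
    ring
  calc (-1 : R) ^ (∑ l ∈ Iio b, update f c v l)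
      = (-1) ^ (∑ l ∈ Iio b, update f c v l + f c) * (-1) ^ f c := by
        rw [pow_add, mul_assoc, neg_one_pow_mul_self, mul_one]
    _ = _ := by rw [hsum, pow_add]; ring

end Signs

namespace SkewPoly

variable {n : ℕ}

theorem X_mul_X_of_ne {i j : Fin n} (h : i ≠ j) : X i * X j = (-1 : ℂ) • (X j * X i) := by
  have hrel := RingQuot.mkAlgHom_rel ℂ (SkewRel.anticomm i j h)
  simp only [map_mul, map_neg] at hrel
  rw [X, X, hrel]
  module

theorem X_mul_X_pow_of_ne {i j : Fin n} (h : i ≠ j) (m : ℕ) :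
    X i * X j ^ m = (-1 : ℂ) ^ m • (X j ^ m * X i) := by
  induction m with
  | zero => simp
  | succ m ih =>
    rw [pow_succ, ← mul_assoc, ih, smul_mul_assoc, mul_assoc, X_mul_X_of_ne h, mul_smul_comm,
      smul_smul, ← mul_assoc, ← pow_succ, ← pow_succ]

theorem algHom_ext_s12 {F G : SkewPoly n →ₐ[ℂ] SkewPoly n} (h : ∀ i, F (X i) = G (X i)) :
    F = G :=
  RingQuot.ringQuot_ext' _ _ _ (FreeAlgebra.hom_ext (funext h))

theorem eq_top_of_one_mem_of_X_mul_mem {M : Submodule ℂ (SkewPoly n)} (h1 : 1 ∈ M)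
    (hX : ∀ a, ∀ g ∈ M, X a * g ∈ M) : M = ⊤ := by
  have hmul (x : FreeAlgebra ℂ (Fin n)) :
      ∀ g ∈ M, RingQuot.mkAlgHom ℂ (SkewRel n) x * g ∈ M := by
    induction x using FreeAlgebra.induction with
    | grade0 r => intro g hg; simpa [Algebra.smul_def] using M.smul_mem r hg
    | grade1 a => exact hX a
    | mul x y hx hy => intro g hg; simpa [mul_assoc] using hx _ (hy g hg)
    | add x y hx hy => intro g hg; simpa [add_mul] using M.add_mem (hx g hg) (hy g hg)
  refine eq_top_iff.2 fun y _ => ?_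
  obtain ⟨x, rfl⟩ := RingQuot.mkAlgHom_surjective ℂ (SkewRel n) y
  simpa using hmul x 1 h1

theorem linearMap_ext_s12 {F G : Module.End ℂ (SkewPoly n)} (h1 : F 1 = G 1)
    (hX : ∀ a g, F g = G g → F (X a * g) = G (X a * g)) : F = G := by
  have htop : LinearMap.eqLocus F G = ⊤ := eq_top_of_one_mem_of_X_mul_mem h1 hX
  ext y
  exact (htop ▸ Submodule.mem_top : y ∈ LinearMap.eqLocus F G)

def orderedMonomial (lam : Fin n → ℕ) : SkewPoly n :=
  ((List.finRange n).map fun j => X j ^ lam j).prod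

theorem X_mul_prod_pow {w : List (Fin n)} (hw : w.Pairwise (· < ·)) {a : Fin n} (ha : a ∈ w)
    (lam : Fin n → ℕ) :
    X a * (w.map fun l => X l ^ lam l).prod =
      (-1 : ℂ) ^ (w.map fun l => if l < a then lam l else 0).sum •
        (w.map fun l => X l ^ update lam a (lam a + 1) l).prod := by
  induction w with
  | nil => simp at ha
  | cons b w ih =>
    rw [List.pairwise_cons] at hw
    simp only [List.map_cons, List.prod_cons, List.sum_cons]
    rcases eq_or_ne a b with rfl | hab
    · have ha' : a ∉ w := fun h => lt_irrefl a (hw.1 a h)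
      have hfix : (w.map fun l => X l ^ update lam a (lam a + 1) l) = w.map fun l => X l ^ lam l :=
        List.map_congr_left fun l hl => by rw [update_of_ne (ne_of_mem_of_not_mem hl ha')]
      have hzero : (w.map fun l => if l < a then lam l else 0).sum = 0 :=
        List.sum_eq_zero fun x hx => by
          obtain ⟨l, hl, rfl⟩ := List.mem_map.1 hx
          exact if_neg (hw.1 l hl).asymm
      rw [hfix, hzero, if_neg (lt_irrefl a), update_self, pow_succ', mul_assoc]
      simp
    · have hba : b < a := hw.1 a (by simpa [hab] using ha)
      rw [← mul_assoc, X_mul_X_pow_of_ne hab, smul_mul_assoc, mul_assoc,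
        ih hw.2 (by simpa [hab] using ha), update_of_ne hab.symm, if_pos hba, mul_smul_comm,
        smul_smul, ← pow_add]

theorem X_mul_orderedMonomial (a : Fin n) (lam : Fin n → ℕ) :
    X a * orderedMonomial lam =
      (-1 : ℂ) ^ (∑ l ∈ Iio a, lam l) • orderedMonomial (update lam a (lam a + 1)) := by
  rw [orderedMonomial, X_mul_prod_pow (List.sortedLT_finRange n).pairwise (List.mem_finRange a),
    ← Fin.sum_univ_def, ← sum_filter, filter_gt_eq_Iio]
  rfl

theorem linearMap_ext_orderedMonomial {F G : Module.End ℂ (SkewPoly n)}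
    (h : ∀ lam, F (orderedMonomial lam) = G (orderedMonomial lam)) : F = G := by
  refine LinearMap.ext_on_range (eq_top_of_one_mem_of_X_mul_mem
    (Submodule.subset_span ⟨0, by simp [orderedMonomial]⟩) fun a g hg => ?_) h
  induction hg using Submodule.span_induction with
  | mem _ hm =>
    obtain ⟨lam, rfl⟩ := hm
    rw [X_mul_orderedMonomial]
    exact Submodule.smul_mem _ _ (Submodule.subset_span ⟨_, rfl⟩)
  | zero => simp
  | add x y _ _ hx hy => rw [mul_add]; exact add_mem hx hy
  | smul c x _ hx => rw [mul_smul_comm]; exact Submodule.smul_mem _ _ hx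

-- `P` is the operator `p_j`, given by its action on the monomial basis.
def IsOddPartial (j : Fin n) (P : Module.End ℂ (SkewPoly n)) : Prop :=
  ∀ lam : Fin n → ℕ, P (orderedMonomial lam) =
    ((lam j : ℂ) * (-1) ^ (∑ l ∈ Iio j, lam l)) • orderedMonomial (update lam j (lam j - 1))

namespace IsOddPartial

variable {j : Fin n} {P : Module.End ℂ (SkewPoly n)}

theorem apply_X_self_mul (hP : IsOddPartial j P) (g : SkewPoly n) :
    P (X j * g) = g + X j * P g := by
  suffices P * LinearMap.mulLeft ℂ (X j) = 1 + LinearMap.mulLeft ℂ (X j) * P from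
    LinearMap.congr_fun this g
  refine linearMap_ext_orderedMonomial fun lam => ?_
  have hS (v : ℕ) : ∑ l ∈ Iio j, update lam j v l = ∑ l ∈ Iio j, lam l :=
    sum_Iio_update_of_not_lt (lt_irrefl j) lam v
  set e : ℂ := (-1) ^ (∑ l ∈ Iio j, lam l)
  have he : e * e = 1 := neg_one_pow_mul_self (R := ℂ) _
  simp only [Module.End.mul_apply, LinearMap.add_apply, Module.End.one_apply,
    LinearMap.mulLeft_apply]
  rw [X_mul_orderedMonomial, map_smul, hP, hP, hS, update_self, update_idem, Nat.add_sub_cancel,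
    update_eq_self, mul_smul_comm, X_mul_orderedMonomial, hS, update_idem, update_self, smul_smul,
    smul_smul]
  rcases Nat.eq_zero_or_pos (lam j) with h0 | hpos
  · simp [h0, e, he]
  · rw [Nat.sub_add_cancel hpos, update_eq_self]
    match_scalars
    linear_combination ((lam j : ℂ) + 1) * he - (lam j : ℂ) * he

theorem apply_X_mul_of_ne (hP : IsOddPartial j P) {a : Fin n} (haj : a ≠ j) (g : SkewPoly n) :
    P (X a * g) = (-1 : ℂ) • (X a * P g) := by
  suffices P * LinearMap.mulLeft ℂ (X a) = (-1 : ℂ) • (LinearMap.mulLeft ℂ (X a) * P) from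
    LinearMap.congr_fun this g
  refine linearMap_ext_orderedMonomial fun lam => ?_
  simp only [Module.End.mul_apply, LinearMap.smul_apply, LinearMap.mulLeft_apply]
  rw [X_mul_orderedMonomial, map_smul, hP, update_of_ne haj.symm, update_comm haj, hP,
    mul_smul_comm, X_mul_orderedMonomial, update_of_ne haj, smul_smul, smul_smul, smul_smul]
  congr 1
  rcases haj.lt_or_gt with haj | hja
  · rw [neg_one_pow_sum_Iio_update_of_lt haj, sum_Iio_update_of_not_lt haj.asymm]
    linear_combination -(lam j : ℂ) * (-1) ^ (∑ l ∈ Iio a, lam l) *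
      (-1) ^ (∑ l ∈ Iio j, lam l) * neg_one_pow_mul_self (R := ℂ) (lam a)
  · rw [sum_Iio_update_of_not_lt hja.asymm, neg_one_pow_sum_Iio_update_of_lt hja]
    -- `lam j - 1` truncates when `lam j = 0`, but then the coefficient `lam j` vanishes.
    cases hm : lam j with
    | zero => simp
    | succ m =>
      rw [Nat.add_sub_cancel]
      push_cast
      linear_combination (-(m : ℂ) - 1) * (-1) ^ (∑ l ∈ Iio a, lam l) *
        (-1) ^ (∑ l ∈ Iio j, lam l) * neg_one_pow_mul_self (R := ℂ) m

end IsOddPartial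

def IsSwap (i k : Fin n) (σ : SkewPoly n →ₐ[ℂ] SkewPoly n) : Prop :=
  ∀ a, σ (X a) = X (Equiv.swap i k a)

-- `δ` is `∂_{j,m}` and `τ` is `s_{j,m}`.
structure IsOddDivDiff (j m : Fin n) (τ : SkewPoly n →ₐ[ℂ] SkewPoly n)
    (δ : Module.End ℂ (SkewPoly n)) : Prop where
  isSwap : IsSwap j m τ
  apply_X_left : δ (X j) = 1
  apply_X_right : δ (X m) = 1
  apply_X_of_ne : ∀ a, a ≠ j → a ≠ m → δ (X a) = 0
  map_mul : ∀ (d : ℕ) (f g : SkewPoly n), IsHomog d f →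
    δ (f * g) = δ f * g + (-1 : ℂ) ^ d • (τ f * δ g)

namespace IsOddDivDiff

variable {j m : Fin n} {τ : SkewPoly n →ₐ[ℂ] SkewPoly n} {δ : Module.End ℂ (SkewPoly n)}

theorem apply_one (hδ : IsOddDivDiff j m τ δ) : δ 1 = 0 := by
  simpa using hδ.map_mul 0 1 1 (Submodule.subset_span ⟨[], rfl, by simp⟩)

theorem apply_X_mul (hδ : IsOddDivDiff j m τ δ) (a : Fin n) (g : SkewPoly n) :
    δ (X a * g) =
      (if a = j ∨ a = m then g else 0) + (-1 : ℂ) • (X (Equiv.swap j m a) * δ g) := by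
  rw [hδ.map_mul 1 (X a) g (Submodule.subset_span ⟨[a], rfl, by simp⟩), hδ.isSwap, pow_one]
  congr 1
  by_cases ha : a = j ∨ a = m
  · rw [if_pos ha]
    rcases ha with rfl | rfl
    · rw [hδ.apply_X_left, one_mul]
    · rw [hδ.apply_X_right, one_mul]
  · rw [if_neg ha, hδ.apply_X_of_ne a (fun h => ha (.inl h)) (fun h => ha (.inr h)), zero_mul]

end IsOddDivDiff

namespace IsSwap

variable {i k j m : Fin n} {σ : SkewPoly n →ₐ[ℂ] SkewPoly n}

theorem semiconjBy {τ τ' : SkewPoly n →ₐ[ℂ] SkewPoly n} (hσ : IsSwap i k σ)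
    (hτ : IsSwap j m τ) (hτ' : IsSwap (Equiv.swap i k j) (Equiv.swap i k m) τ') :
    SemiconjBy σ.toLinearMap τ.toLinearMap τ'.toLinearMap := by
  have h : σ.comp τ = τ'.comp σ := algHom_ext_s12 fun a => by
    rw [AlgHom.comp_apply, AlgHom.comp_apply, hτ, hσ, hσ, hτ',
      (Equiv.swap i k).injective.swap_apply]
  exact LinearMap.ext fun g => DFunLike.congr_fun h g

theorem semiconjBy_of_isOddDivDiff {τ τ' : SkewPoly n →ₐ[ℂ] SkewPoly n}
    {δ δ' : Module.End ℂ (SkewPoly n)} (hσ : IsSwap i k σ) (hδ : IsOddDivDiff j m τ δ)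
    (hδ' : IsOddDivDiff (Equiv.swap i k j) (Equiv.swap i k m) τ' δ') :
    SemiconjBy σ.toLinearMap δ δ' := by
  refine linearMap_ext_s12 (by simp [hδ.apply_one, hδ'.apply_one]) fun a g hg => ?_
  simp only [Module.End.mul_apply, AlgHom.toLinearMap_apply] at hg ⊢
  rw [hδ.apply_X_mul, map_mul, hσ, hδ'.apply_X_mul, map_add, map_smul, map_mul, hσ, hg,
    (Equiv.swap i k).injective.swap_apply, apply_ite σ, map_zero]
  simp

theorem semiconjBy_of_isOddPartial {P P' : Module.End ℂ (SkewPoly n)} (hσ : IsSwap i k σ)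
    (hP : IsOddPartial j P) (hP' : IsOddPartial (Equiv.swap i k j) P') :
    SemiconjBy σ.toLinearMap P P' := by
  have hone {l : Fin n} {Q : Module.End ℂ (SkewPoly n)} (hQ : IsOddPartial l Q) : Q 1 = 0 := by
    simpa [orderedMonomial] using hQ 0
  refine linearMap_ext_s12 (by simp [hone hP, hone hP']) fun a g hg => ?_
  simp only [Module.End.mul_apply, AlgHom.toLinearMap_apply] at hg ⊢
  rw [map_mul σ, hσ]
  rcases eq_or_ne a j with rfl | haj
  · rw [hP.apply_X_self_mul, hP'.apply_X_self_mul, map_add, map_mul, hσ, hg]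
  · rw [hP.apply_X_mul_of_ne haj, hP'.apply_X_mul_of_ne ((Equiv.swap i k).injective.ne haj),
      map_smul, map_mul, hσ, hg]

end IsSwap

theorem semiconjBy_dunkl {s : Fin n → Fin n → (SkewPoly n →ₐ[ℂ] SkewPoly n)}
    {pd r : Fin n → Fin n → Module.End ℂ (SkewPoly n)}
    {p : Fin n → Module.End ℂ (SkewPoly n)}
    (hpd : ∀ i k, i ≠ k → IsOddDivDiff i k (s i k) (pd i k))
    (hr : ∀ i k, i ≠ k → r i k = pd i k ∘ₗ (s i k).toLinearMap)
    (hp : ∀ i, IsOddPartial i (p i)) (t u : ℂ) {i k : Fin n} (hik : i ≠ k) (j : Fin n) :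
    SemiconjBy (s i k).toLinearMap (t • p j + u • ∑ m ∈ univ \ {j}, r j m)
      (t • p (Equiv.swap i k j) +
        u • ∑ m ∈ univ \ {Equiv.swap i k j}, r (Equiv.swap i k j) m) := by
  set π := Equiv.swap i k
  have hσ : IsSwap i k (s i k) := (hpd i k hik).isSwap
  refine ((hσ.semiconjBy_of_isOddPartial (hp j) (hp (π j))).smul_right t).add_right
    (SemiconjBy.smul_right ?_ u)
  rw [← sum_equiv π (s := univ \ {j}) (f := fun m => r (π j) (π m)) (by simp) fun _ _ => rfl]
  refine SemiconjBy.finset_sum_right fun m hm => ?_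
  have hjm : j ≠ m := by simpa [eq_comm] using hm
  have hπ : π j ≠ π m := π.injective.ne hjm
  rw [hr j m hjm, hr _ _ hπ, ← Module.End.mul_eq_comp, ← Module.End.mul_eq_comp]
  exact (hσ.semiconjBy_of_isOddDivDiff (hpd j m hjm) (hpd _ _ hπ)).mul_right
    (hσ.semiconjBy (hpd j m hjm).isSwap (hpd _ _ hπ).isSwap)

end SkewPoly

theorem stmt12_general (n : ℕ)
    -- `s i k` is the algebra automorphism of `P⁻` swapping `xᵢ` and `x_k`
    (s : Fin n → Fin n → (SkewPoly n →ₐ[ℂ] SkewPoly n))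
    (hs : ∀ i k j : Fin n, i ≠ k → s i k (X j) = X (Equiv.swap i k j))
    -- `pd i k` is the odd divided difference operator `∂_{i,k}`
    (pd : Fin n → Fin n → Module.End ℂ (SkewPoly n))
    (hpdi : ∀ i k : Fin n, i ≠ k → pd i k (X i) = 1)
    (hpdk : ∀ i k : Fin n, i ≠ k → pd i k (X k) = 1)
    (hpd0 : ∀ i k j : Fin n, i ≠ k → j ≠ i → j ≠ k → pd i k (X j) = 0)
    (hpdL : ∀ i k : Fin n, i ≠ k → ∀ (d : ℕ) (f g : SkewPoly n), IsHomog d f →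
      pd i k (f * g) = pd i k f * g + (-1 : ℂ) ^ d • (s i k f * pd i k g))
    -- `r i k = ∂_{i,k} ∘ s_{i,k}`
    (r : Fin n → Fin n → Module.End ℂ (SkewPoly n))
    (hr : ∀ i k : Fin n, i ≠ k → r i k = pd i k ∘ₗ (s i k).toLinearMap)
    -- `p i` is the operator `pᵢ`, defined on the monomial basis
    (p : Fin n → Module.End ℂ (SkewPoly n))
    (hp : ∀ (i : Fin n) (lam : Fin n → ℕ),
      p i (((List.finRange n).map fun j => X j ^ lam j).prod)
        = ((lam i : ℂ) * (-1 : ℂ) ^ (∑ j ∈ Finset.Iio i, lam j)) •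
            ((List.finRange n).map fun j => X j ^ (Function.update lam i (lam i - 1)) j).prod)
    (t u : ℂ)
    -- `D i = t pᵢ + u Σ_{k ≠ i} r_{i,k}`
    (D : Fin n → Module.End ℂ (SkewPoly n))
    (hD : ∀ i : Fin n, D i = t • p i + u • ∑ k ∈ Finset.univ \ {i}, r i k)
    -- `Δ = −(2t)⁻¹ Σᵢ Dᵢ²`
    (Δ : Module.End ℂ (SkewPoly n))
    (hΔ : Δ = (-(2 * t)⁻¹) • ∑ i : Fin n, D i ^ 2)
    (S : Module.End ℂ (SkewPoly n))
    (hS : S = ∑ i : Fin n, ∑ k ∈ Finset.univ \ {i}, (s i k).toLinearMap) :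
    S * Δ = Δ * S := by
  have hpd : ∀ i k, i ≠ k → SkewPoly.IsOddDivDiff i k (s i k) (pd i k) := fun i k hik =>
    ⟨fun a => hs i k a hik, hpdi i k hik, hpdk i k hik, fun a => hpd0 i k a hik, hpdL i k hik⟩
  have hsΔ : ∀ i k, i ≠ k → Commute (s i k).toLinearMap Δ := fun i k hik => by
    have hDsemiconj (j : Fin n) : SemiconjBy (s i k).toLinearMap (D j) (D (Equiv.swap i k j)) := by
      rw [hD, hD]
      exact SkewPoly.semiconjBy_dunkl hpd hr hp t u hik j
    rw [hΔ]
    exact (commute_sum_pow_of_semiconjBy (Equiv.swap i k) hDsemiconj 2).smul_right _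
  rw [hS]
  exact Commute.sum_left _ _ _ fun i _ =>
    Commute.sum_left _ _ _ fun k hk => hsΔ i k (by simpa [eq_comm] using hk)

/-- The operator `S = Σᵢ Σ_{k ≠ i} s_{i,k}` commutes with `Δ`. -/
theorem stmt12 (n : ℕ) (hn : 2 ≤ n)
    -- `s i k` is the algebra automorphism of `P⁻` swapping `xᵢ` and `x_k`
    (s : Fin n → Fin n → (SkewPoly n →ₐ[ℂ] SkewPoly n))
    (hs : ∀ i k j : Fin n, i ≠ k → s i k (X j) = X (Equiv.swap i k j))
    -- `τ i` is the algebra automorphism of `P⁻` sending `xᵢ` to `-xᵢ` and fixing the others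
    (τ : Fin n → (SkewPoly n →ₐ[ℂ] SkewPoly n))
    (hτ : ∀ i j : Fin n, τ i (X j) = if j = i then -X j else X j)
    -- `pd i k` is the odd divided difference operator `∂_{i,k}`
    (pd : Fin n → Fin n → Module.End ℂ (SkewPoly n))
    (hpdi : ∀ i k : Fin n, i ≠ k → pd i k (X i) = 1)
    (hpdk : ∀ i k : Fin n, i ≠ k → pd i k (X k) = 1)
    (hpd0 : ∀ i k j : Fin n, i ≠ k → j ≠ i → j ≠ k → pd i k (X j) = 0)
    (hpdL : ∀ i k : Fin n, i ≠ k → ∀ (d : ℕ) (f g : SkewPoly n), IsHomog d f →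
      pd i k (f * g) = pd i k f * g + (-1 : ℂ) ^ d • (s i k f * pd i k g))
    -- `r i k = ∂_{i,k} ∘ s_{i,k}`
    (r : Fin n → Fin n → Module.End ℂ (SkewPoly n))
    (hr : ∀ i k : Fin n, i ≠ k → r i k = pd i k ∘ₗ (s i k).toLinearMap)
    -- `p i` is the operator `pᵢ`, defined on the monomial basis
    (p : Fin n → Module.End ℂ (SkewPoly n))
    (hp : ∀ (i : Fin n) (lam : Fin n → ℕ),
      p i (((List.finRange n).map fun j => X j ^ lam j).prod)
        = ((lam i : ℂ) * (-1 : ℂ) ^ (∑ j ∈ Finset.Iio i, lam j)) •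
            ((List.finRange n).map fun j => X j ^ (Function.update lam i (lam i - 1)) j).prod)
    (t u : ℂ) (ht : t ≠ 0)
    -- `D i = t pᵢ + u Σ_{k ≠ i} r_{i,k}`
    (D : Fin n → Module.End ℂ (SkewPoly n))
    (hD : ∀ i : Fin n, D i = t • p i + u • ∑ k ∈ Finset.univ \ {i}, r i k)
    -- `Δ = −(2t)⁻¹ Σᵢ Dᵢ²`
    (Δ : Module.End ℂ (SkewPoly n))
    (hΔ : Δ = (-(2 * t)⁻¹) • ∑ i : Fin n, D i ^ 2)
    (S : Module.End ℂ (SkewPoly n))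
    (hS : S = ∑ i : Fin n, ∑ k ∈ Finset.univ \ {i}, (s i k).toLinearMap) :
    S * Δ = Δ * S :=
  stmt12_general n s hs pd hpdi hpdk hpd0 hpdL r hr p hp t u D hD Δ hΔ S hS
end
end

section
/- For every 1 ≤ i ≤ n−1 and every 1 ≤ k ≤ n, the q-divided difference operator annihilates the twisted elementary q-symmetric polynomial: ∂_i(ẽ_k) = 0. Hence the subalgebra of P^q_n generated by ẽ₁,…,ẽₙ is contained in ∩_{i=1}^{n−1} ker(∂_i). -/
/-!
Split a monomial `x̃_S` of `ẽ_k` at the pair `i < i + 1`: `x̃_S = x̃_{S<i} · m · x̃_{S>i+1}`, where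
`m` is `1`, `x̃ᵢ`, `x̃ᵢ₊₁` or `x̃ᵢ x̃ᵢ₊₁`. The `q`-Leibniz rule makes `∂ᵢ` vanish on the outer factors,
so `∂ᵢ x̃_S = σᵢ(x̃_{S<i}) · ∂ᵢ m · x̃_{S>i+1}`. Since `∂ᵢ x̃ᵢ = qⁱ = -∂ᵢ x̃ᵢ₊₁` and
`∂ᵢ(x̃ᵢ x̃ᵢ₊₁) = 0`, the terms of `∂ᵢ ẽ_k` cancel in pairs under the transposition `(i i+1)` of `S`.
The Leibniz rule also makes `ker ∂ᵢ` a subalgebra, which then contains every `ẽ_k`.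
-/

noncomputable section

/-- The defining relations of the `q`-polynomial ring
`P^q_n = ℂ⟨x₁,…,xₙ⟩/⟨xⱼxᵢ − q xᵢxⱼ : i < j⟩`. -/
inductive QRel (n : ℕ) (q : ℂ) : FreeAlgebra ℂ (Fin n) → FreeAlgebra ℂ (Fin n) → Prop
  | qcomm (i j : Fin n) (h : i < j) :
      QRel n q (FreeAlgebra.ι ℂ j * FreeAlgebra.ι ℂ i)
        (q • (FreeAlgebra.ι ℂ i * FreeAlgebra.ι ℂ j))

/-- The `q`-polynomial ring `P^q_n`. -/
abbrev QPoly (n : ℕ) (q : ℂ) := RingQuot (QRel n q)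

/-- The generators `xᵢ` of `P^q_n`. -/
def Y {n : ℕ} {q : ℂ} (i : Fin n) : QPoly n q :=
  RingQuot.mkAlgHom ℂ (QRel n q) (FreeAlgebra.ι ℂ i)

def mulY {n : ℕ} {q : ℂ} (i : Fin n) : Module.End ℂ (QPoly n q) :=
  LinearMap.mulLeft ℂ (Y i)

open Finset

section SortedProd

variable {ι M : Type*} [LinearOrder ι] [Monoid M] (x : ι → M)

def sortedProd (S : Finset ι) : M := ((S.sort (· ≤ ·)).map x).prod

lemma sortedProd_union {A B : Finset ι} (h : ∀ a ∈ A, ∀ b ∈ B, a < b) :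
    sortedProd x (A ∪ B) = sortedProd x A * sortedProd x B := by
  have hsort : (A ∪ B).sort (· ≤ ·) = A.sort (· ≤ ·) ++ B.sort (· ≤ ·) := by
    refine List.Perm.eq_of_pairwise' (r := (· < ·)) (sortedLT_sort _).pairwise ?_ ?_
    · exact List.pairwise_append.2 ⟨(sortedLT_sort _).pairwise, (sortedLT_sort _).pairwise,
        fun a ha b hb => h a (mem_sort _ |>.1 ha) b (mem_sort _ |>.1 hb)⟩
    · refine (List.perm_ext_iff_of_nodup (sort_nodup _ _) ?_).2 fun a => ?_
      · exact (sort_nodup _ _).append (sort_nodup _ _)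
          (List.disjoint_iff_ne.2 fun a ha b hb =>
            (h a (mem_sort _ |>.1 ha) b (mem_sort _ |>.1 hb)).ne)
      · simp
  simp [sortedProd, hsort]

lemma sortedProd_filter_eq (S : Finset ι) (b : ι) :
    sortedProd x (S.filter (· = b)) = if b ∈ S then x b else 1 := by
  rw [filter_eq']
  split_ifs <;> simp [sortedProd]

lemma sortedProd_eq_of_covBy {i i' : ι} (hii' : i ⋖ i') (S : Finset ι) :
    sortedProd x S = sortedProd x (S.filter (· < i)) *
      ((if i ∈ S then x i else 1) * (if i' ∈ S then x i' else 1)) *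
      sortedProd x (S.filter (i' < ·)) := by
  have hlt := hii'.lt
  have hS : S = S.filter (· < i) ∪
      (S.filter (· = i) ∪ (S.filter (· = i') ∪ S.filter (i' < ·))) := by
    ext j
    have hj : j < i ∨ j = i ∨ j = i' ∨ i' < j := by
      rcases lt_trichotomy j i' with h | h | h
      · exact (hii'.le_of_lt h).lt_or_eq.imp_right Or.inl
      · exact Or.inr (Or.inr (Or.inl h))
      · exact Or.inr (Or.inr (Or.inr h))
    simp only [mem_union, mem_filter]
    tauto
  conv_lhs => rw [hS]
  rw [sortedProd_union, sortedProd_union, sortedProd_union, sortedProd_filter_eq,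
    sortedProd_filter_eq, mul_assoc, mul_assoc]
  all_goals
    simp only [mem_union, mem_filter]
    grind

end SortedProd

section TwistedDerivation

variable {R F : Type*} [Ring R] [FunLike F R R] {σ : F} {d : R → R}

lemma map_mul_mul_of_leibniz (hd : ∀ f g, d (f * g) = d f * g + σ f * d g)
    {a b c : R} (ha : d a = 0) (hc : d c = 0) : d (a * b * c) = σ a * d b * c := by
  rw [hd, hd, ha, hc, zero_mul, zero_add, mul_zero, add_zero]

variable [OneHomClass F R R]

lemma map_one_eq_zero_of_leibniz (hd : ∀ f g, d (f * g) = d f * g + σ f * d g) : d 1 = 0 := by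
  simpa using hd 1 1

lemma map_list_prod_eq_zero_of_leibniz (hd : ∀ f g, d (f * g) = d f * g + σ f * d g)
    {l : List R} (hl : ∀ a ∈ l, d a = 0) : d l.prod = 0 := by
  induction l with
  | nil => exact map_one_eq_zero_of_leibniz hd
  | cons a l ih =>
    rw [List.forall_mem_cons] at hl
    rw [List.prod_cons, hd, hl.1, ih hl.2, zero_mul, mul_zero, add_zero]

variable {a b : R} (p p' : Prop) [Decidable p] [Decidable p']

lemma map_ite_mul_ite_eq_zero (hd : ∀ f g, d (f * g) = d f * g + σ f * d g)
    (hab : d a * b + σ a * d b = 0) :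
    d ((if p then a else 1) * (if p then b else 1)) = 0 := by
  split_ifs
  · rw [hd, hab]
  · rw [mul_one, map_one_eq_zero_of_leibniz hd]

lemma map_ite_mul_ite_add_swap (hd : ∀ f g, d (f * g) = d f * g + σ f * d g)
    (ha_b : d a + d b = 0) (hab : d a * b + σ a * d b = 0) :
    d ((if p then a else 1) * (if p' then b else 1)) +
      d ((if p' then a else 1) * (if p then b else 1)) = 0 := by
  by_cases hp : p <;> by_cases hp' : p' <;>
    simp only [hp, hp', if_true, if_false, mul_one, one_mul]
  · rw [hd, hab, add_zero]
  · exact ha_b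
  · rw [add_comm, ha_b]
  · rw [map_one_eq_zero_of_leibniz hd, add_zero]

end TwistedDerivation

section SwapCancellation

variable {ι R F : Type*} [LinearOrder ι] [Ring R] [FunLike F R R] [OneHomClass F R R]
  {σ : F} {d : R → R} {x : ι → R} {i i' : ι}

lemma map_sortedProd_eq_zero_of_leibniz (hd : ∀ f g, d (f * g) = d f * g + σ f * d g)
    {S : Finset ι} (hS : ∀ j ∈ S, d (x j) = 0) : d (sortedProd x S) = 0 :=
  map_list_prod_eq_zero_of_leibniz hd <| by simpa using hS

lemma map_sortedProd_eq_of_covBy (hd : ∀ f g, d (f * g) = d f * g + σ f * d g)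
    (hii' : i ⋖ i') (hx : ∀ j, j ≠ i → j ≠ i' → d (x j) = 0) (S : Finset ι) :
    d (sortedProd x S) = σ (sortedProd x (S.filter (· < i))) *
      d ((if i ∈ S then x i else 1) * (if i' ∈ S then x i' else 1)) *
      sortedProd x (S.filter (i' < ·)) := by
  rw [sortedProd_eq_of_covBy x hii' S, map_mul_mul_of_leibniz hd]
  all_goals
    have hlt := hii'.lt
    exact map_sortedProd_eq_zero_of_leibniz hd fun j hj => hx j (by grind) (by grind)

lemma map_sortedProd_add_map_swap (hd : ∀ f g, d (f * g) = d f * g + σ f * d g)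
    (hii' : i ⋖ i') (hx : ∀ j, j ≠ i → j ≠ i' → d (x j) = 0) (ha_b : d (x i) + d (x i') = 0)
    (hab : d (x i) * x i' + σ (x i) * d (x i') = 0) (S : Finset ι) :
    d (sortedProd x S) + d (sortedProd x (S.map (Equiv.swap i i').toEmbedding)) = 0 := by
  have hlt := hii'.lt
  have hlow : (S.map (Equiv.swap i i').toEmbedding).filter (· < i) = S.filter (· < i) := by
    ext j
    simp only [mem_filter, mem_map_equiv, Equiv.symm_swap]
    grind [Equiv.swap_apply_of_ne_of_ne]
  have hhigh : (S.map (Equiv.swap i i').toEmbedding).filter (i' < ·) = S.filter (i' < ·) := by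
    ext j
    simp only [mem_filter, mem_map_equiv, Equiv.symm_swap]
    grind [Equiv.swap_apply_of_ne_of_ne]
  rw [map_sortedProd_eq_of_covBy hd hii' hx, map_sortedProd_eq_of_covBy hd hii' hx, hlow, hhigh]
  simp only [mem_map_equiv, Equiv.symm_swap, Equiv.swap_apply_left, Equiv.swap_apply_right]
  rw [← add_mul, ← mul_add, map_ite_mul_ite_add_swap _ _ hd ha_b hab, mul_zero, zero_mul]

lemma map_sortedProd_eq_zero_of_map_swap_eq (hd : ∀ f g, d (f * g) = d f * g + σ f * d g)
    (hii' : i ⋖ i') (hx : ∀ j, j ≠ i → j ≠ i' → d (x j) = 0)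
    (hab : d (x i) * x i' + σ (x i) * d (x i') = 0) {S : Finset ι}
    (hS : S.map (Equiv.swap i i').toEmbedding = S) : d (sortedProd x S) = 0 := by
  have hmem : i' ∈ S ↔ i ∈ S := by
    conv_rhs => rw [← hS]
    simp
  rw [map_sortedProd_eq_of_covBy hd hii' hx]
  simp only [hmem, map_ite_mul_ite_eq_zero _ hd hab, mul_zero, zero_mul]

theorem sum_powersetCard_map_sortedProd_eq_zero [Fintype ι]
    (hd : ∀ f g, d (f * g) = d f * g + σ f * d g)
    (hii' : i ⋖ i') (hx : ∀ j, j ≠ i → j ≠ i' → d (x j) = 0) (ha_b : d (x i) + d (x i') = 0)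
    (hab : d (x i) * x i' + σ (x i) * d (x i') = 0) (k : ℕ) :
    ∑ S ∈ powersetCard k univ, d (sortedProd x S) = 0 :=
  sum_involution (fun S _ => S.map (Equiv.swap i i').toEmbedding)
    (fun S _ => map_sortedProd_add_map_swap hd hii' hx ha_b hab S)
    (fun _ _ hS hfix => hS (map_sortedProd_eq_zero_of_map_swap_eq hd hii' hx hab hfix))
    (fun S hS => by simpa using hS)
    (fun S _ => by ext; simp [mem_map_equiv])

end SwapCancellation

lemma map_eq_zero_of_mem_adjoin_of_leibniz {K R F : Type*} [CommSemiring K] [Ring R]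
    [Algebra K R] [FunLike F R R] [OneHomClass F R R] {σ : F} {d : R →ₗ[K] R}
    (hd : ∀ f g, d (f * g) = d f * g + σ f * d g) {s : Set R} (hs : ∀ g ∈ s, d g = 0) {f : R}
    (hf : f ∈ Algebra.adjoin K s) : d f = 0 := by
  induction hf using Algebra.adjoin_induction with
  | mem g hg => exact hs g hg
  | algebraMap r =>
    rw [Algebra.algebraMap_eq_smul_one, map_smul, map_one_eq_zero_of_leibniz (d := d) hd,
      smul_zero]
  | add f g _ _ hf hg => rw [map_add, hf, hg, add_zero]
  | mul f g _ _ hf hg => rw [hd, hf, hg, zero_mul, mul_zero, add_zero]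

theorem stmt17_general (n : ℕ) (q : ℂ)
    -- `σ i` is the braid-group algebra automorphism of `P^q_n`
    (σ : Fin n → (QPoly n q →ₐ[ℂ] QPoly n q))
    (hσ : ∀ i i' : Fin n, (i' : ℕ) = (i : ℕ) + 1 →
      σ i (Y i) = q • Y i' ∧ σ i (Y i') = q⁻¹ • Y i ∧
      (∀ j : Fin n, (i : ℕ) + 1 < (j : ℕ) → σ i (Y j) = q • Y j) ∧
      (∀ j : Fin n, (j : ℕ) < (i : ℕ) → σ i (Y j) = q⁻¹ • Y j))
    -- `pd i` is the `q`-divided difference operator `∂ᵢ`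
    (pd : Fin n → Module.End ℂ (QPoly n q))
    (hpd : ∀ i i' : Fin n, (i' : ℕ) = (i : ℕ) + 1 →
      pd i (Y i) = q • (1 : QPoly n q) ∧ pd i (Y i') = -1 ∧
      (∀ j : Fin n, j ≠ i → j ≠ i' → pd i (Y j) = 0))
    -- the `q`-Leibniz rule
    (hpdL : ∀ (i : Fin n) (f g : QPoly n q),
      pd i (f * g) = pd i f * g + σ i f * pd i g)
    -- `e k` is the `k`-th twisted elementary `q`-symmetric polynomial `ẽ_k`
    (e : ℕ → QPoly n q)
    (he : ∀ k : ℕ, e k = ∑ S ∈ Finset.powersetCard k (Finset.univ : Finset (Fin n)),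
      ((S.sort (· ≤ ·)).map fun j : Fin n => q ^ (j : ℕ) • Y j).prod) :
    (∀ i : Fin n, (i : ℕ) + 1 < n → ∀ k : ℕ, 1 ≤ k → k ≤ n → pd i (e k) = 0) ∧
    (∀ f ∈ Algebra.adjoin ℂ {g : QPoly n q | ∃ k : ℕ, 1 ≤ k ∧ k ≤ n ∧ g = e k},
      ∀ i : Fin n, (i : ℕ) + 1 < n → pd i f = 0) := by
  have hker : ∀ i : Fin n, (i : ℕ) + 1 < n → ∀ k, pd i (e k) = 0 := by
    intro i hi k
    set i' : Fin n := ⟨i + 1, hi⟩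
    obtain ⟨hσi, -, -, -⟩ := hσ i i' rfl
    obtain ⟨hpi, hpi', hpj⟩ := hpd i i' rfl
    -- rewriting lemmas about `-1` do not see through the `RingQuot` instances, so use `ℂ`-scalars
    replace hpi' : pd i (Y i') = (-1 : ℂ) • 1 := hpi'.trans (neg_one_smul ℂ 1).symm
    rw [he k, map_sum]
    have hii' : i ⋖ i' := Fin.covBy_iff.2 (Nat.covBy_iff_add_one_eq.2 rfl)
    refine sum_powersetCard_map_sortedProd_eq_zero (hpdL i) hii' ?_ ?_ ?_ k
    · intro j hj hj'
      rw [map_smul, hpj j hj hj', smul_zero]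
    · simp only [map_smul, hpi, hpi']
      rw [show (i' : ℕ) = i + 1 from rfl]
      module
    · simp only [map_smul, hpi, hpi', hσi, smul_mul_assoc, mul_smul_comm, one_mul, mul_one]
      rw [show (i' : ℕ) = i + 1 from rfl]
      module
  refine ⟨fun i hi k _ _ => hker i hi k, fun f hf i hi => ?_⟩
  exact map_eq_zero_of_mem_adjoin_of_leibniz (hpdL i)
    (by rintro _ ⟨k, -, -, rfl⟩; exact hker i hi k) hf

/-- The `q`-divided difference operators annihilate the twisted elementary `q`-symmetric
polynomials `ẽ_k = Σ_{i₁<⋯<i_k} x̃_{i₁}⋯x̃_{i_k}` (where `x̃ⱼ = q^{j−1} xⱼ`); hence the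
subalgebra generated by `ẽ₁,…,ẽₙ` lies in `∩ᵢ ker ∂ᵢ`. -/
theorem stmt17 (n : ℕ) (hn : 2 ≤ n) (q : ℂ) (hq : q ≠ 0)
    -- `σ i` is the braid-group algebra automorphism of `P^q_n`
    (σ : Fin n → (QPoly n q →ₐ[ℂ] QPoly n q))
    (hσ : ∀ i i' : Fin n, (i' : ℕ) = (i : ℕ) + 1 →
      σ i (Y i) = q • Y i' ∧ σ i (Y i') = q⁻¹ • Y i ∧
      (∀ j : Fin n, (i : ℕ) + 1 < (j : ℕ) → σ i (Y j) = q • Y j) ∧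
      (∀ j : Fin n, (j : ℕ) < (i : ℕ) → σ i (Y j) = q⁻¹ • Y j))
    -- `pd i` is the `q`-divided difference operator `∂ᵢ`
    (pd : Fin n → Module.End ℂ (QPoly n q))
    (hpd : ∀ i i' : Fin n, (i' : ℕ) = (i : ℕ) + 1 →
      pd i (Y i) = q • (1 : QPoly n q) ∧ pd i (Y i') = -1 ∧
      (∀ j : Fin n, j ≠ i → j ≠ i' → pd i (Y j) = 0))
    -- the `q`-Leibniz rule
    (hpdL : ∀ (i : Fin n) (f g : QPoly n q),
      pd i (f * g) = pd i f * g + σ i f * pd i g)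
    -- `e k` is the `k`-th twisted elementary `q`-symmetric polynomial `ẽ_k`
    (e : ℕ → QPoly n q)
    (he : ∀ k : ℕ, e k = ∑ S ∈ Finset.powersetCard k (Finset.univ : Finset (Fin n)),
      ((S.sort (· ≤ ·)).map fun j : Fin n => q ^ (j : ℕ) • Y j).prod) :
    (∀ i : Fin n, (i : ℕ) + 1 < n → ∀ k : ℕ, 1 ≤ k → k ≤ n → pd i (e k) = 0) ∧
    (∀ f ∈ Algebra.adjoin ℂ {g : QPoly n q | ∃ k : ℕ, 1 ≤ k ∧ k ≤ n ∧ g = e k},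
      ∀ i : Fin n, (i : ℕ) + 1 < n → pd i f = 0) :=
  stmt17_general n q σ hσ pd hpd hpdL e he
end
end

section
/- (Defining relations of the q-nilHecke algebra.) As operators on P^q_n, with x_j denoting left multiplication by x_j, the following hold: ∂_i² = 0 for 1 ≤ i ≤ n−1; ∂_j ∂_i − q ∂_i ∂_j = 0 for j > i+1; ∂_i x_j − q x_j ∂_i = 0 for j > i+1; q ∂_i x_j − x_j ∂_i = 0 for j < i; ∂_i x_i − q x_{i+1} ∂_i = q; and x_i ∂_i − q ∂_i x_{i+1} = q. -/
noncomputable section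

/-! A linear map `D` on `P^q_n` with a twisted Leibniz rule `D (f g) = D f · α g + β f · D g`
(`α`, `β` algebra maps) vanishes as soon as it vanishes on the generators `xₖ`. The `q`-Leibniz
rule makes `σᵢ∂ᵢ + ∂ᵢσᵢ`, `σⱼ∂ᵢ − q ∂ᵢσⱼ` and `∂ⱼσᵢ − q σᵢ∂ⱼ` such maps, hence zero after a check
on generators; granted these, `∂ᵢ²` and `∂ⱼ∂ᵢ − q ∂ᵢ∂ⱼ` are again twisted derivations that kill
the generators. The relations involving `xⱼ` are the `q`-Leibniz rule applied to `xⱼ f`. -/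

section TwistedDerivation

variable {R A B C : Type*} [CommRing R] [Ring A] [Ring B] [Ring C]
  [Algebra R A] [Algebra R B] [Algebra R C]

def IsTwistedDerivation (α β : A →ₐ[R] B) (D : A →ₗ[R] B) : Prop :=
  ∀ f g, D (f * g) = D f * α g + β f * D g

namespace IsTwistedDerivation

variable {α β : A →ₐ[R] B} {D D' : A →ₗ[R] B}

theorem map_one (hD : IsTwistedDerivation α β D) : D 1 = 0 := by
  simpa using hD 1 1

theorem map_algebraMap (hD : IsTwistedDerivation α β D) (r : R) : D (algebraMap R A r) = 0 := by
  rw [Algebra.algebraMap_eq_smul_one, map_smul, hD.map_one, smul_zero]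

theorem add (hD : IsTwistedDerivation α β D) (hD' : IsTwistedDerivation α β D') :
    IsTwistedDerivation α β (D + D') := fun f g => by
  simp only [LinearMap.add_apply, hD f g, hD' f g, add_mul, mul_add]; abel

theorem sub (hD : IsTwistedDerivation α β D) (hD' : IsTwistedDerivation α β D') :
    IsTwistedDerivation α β (D - D') := fun f g => by
  simp only [LinearMap.sub_apply, hD f g, hD' f g, sub_mul, mul_sub]; abel

theorem smul (hD : IsTwistedDerivation α β D) (c : R) : IsTwistedDerivation α β (c • D) :=
  fun f g => by
    simp only [LinearMap.smul_apply, hD f g, smul_add, smul_mul_assoc, mul_smul_comm]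

theorem comp_left (hD : IsTwistedDerivation α β D) (φ : B →ₐ[R] C) :
    IsTwistedDerivation (φ.comp α) (φ.comp β) (φ.toLinearMap ∘ₗ D) := fun f g => by
  simp [hD f g]

theorem comp_right (hD : IsTwistedDerivation α β D) (φ : C →ₐ[R] A) :
    IsTwistedDerivation (α.comp φ) (β.comp φ) (D ∘ₗ φ.toLinearMap) := fun f g => by
  simpa using hD (φ f) (φ g)

theorem eq_zero_of_adjoin_eq_top (hD : IsTwistedDerivation α β D) {s : Set A}
    (hs : Algebra.adjoin R s = ⊤) (h : ∀ x ∈ s, D x = 0) : D = 0 := by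
  refine LinearMap.ext fun x => ?_
  rw [LinearMap.zero_apply]
  induction (hs ▸ Algebra.mem_top : x ∈ Algebra.adjoin R s) using Algebra.adjoin_induction with
  | mem x hx => exact h x hx
  | algebraMap r => exact hD.map_algebraMap r
  | add x y _ _ hx hy => rw [map_add, hx, hy, add_zero]
  | mul x y _ _ hx hy => rw [hD x y, hx, hy, zero_mul, mul_zero, add_zero]

section Endomorphisms

variable {σ σ₁ σ₂ : A →ₐ[R] A} {D D₁ D₂ : A →ₗ[R] A}

theorem mul_self (hD : IsTwistedDerivation (AlgHom.id R A) σ D)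
    (hσD : ∀ f, σ (D f) + D (σ f) = 0) :
    IsTwistedDerivation (AlgHom.id R A) (σ.comp σ) (D * D) := fun f g => by
  have hcross : σ (D f) * D g + D (σ f) * D g = 0 := by rw [← add_mul, hσD, zero_mul]
  rw [Module.End.mul_apply, hD, map_add, hD, hD]
  simp only [Module.End.mul_apply, AlgHom.coe_comp, Function.comp_apply, AlgHom.coe_id, id_eq]
  rw [add_assoc, ← add_assoc (σ (D f) * D g), hcross, zero_add]

theorem mul_sub_smul_mul (hD₁ : IsTwistedDerivation (AlgHom.id R A) σ₁ D₁)
    (hD₂ : IsTwistedDerivation (AlgHom.id R A) σ₂ D₂) (c : R)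
    (hσ : ∀ f, σ₂ (σ₁ f) = σ₁ (σ₂ f)) (h₂₁ : ∀ f, σ₂ (D₁ f) = c • D₁ (σ₂ f))
    (h₁₂ : ∀ f, D₂ (σ₁ f) = c • σ₁ (D₂ f)) :
    IsTwistedDerivation (AlgHom.id R A) (σ₂.comp σ₁) (D₂ * D₁ - c • (D₁ * D₂)) := fun f g => by
  simp only [LinearMap.sub_apply, LinearMap.smul_apply, Module.End.mul_apply]
  rw [hD₁, map_add, hD₂, hD₂, hD₂, map_add, hD₁, hD₁, h₂₁, h₁₂, ← hσ]
  simp only [AlgHom.coe_comp, Function.comp_apply, AlgHom.coe_id, id_eq, smul_add, sub_mul,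
    mul_sub, smul_mul_assoc, mul_smul_comm]
  abel

end Endomorphisms

end IsTwistedDerivation

end TwistedDerivation

theorem Fin.eq_or_eq_or_lt_or_succ_lt {n : ℕ} {i i' : Fin n} (hi : (i' : ℕ) = i + 1)
    (k : Fin n) : k = i ∨ k = i' ∨ (k : ℕ) < i ∨ (i : ℕ) + 1 < k := by
  simp only [Fin.ext_iff]
  omega

namespace QPoly

variable {n : ℕ} {q : ℂ}

theorem adjoin_range_Y : Algebra.adjoin ℂ (Set.range (Y : Fin n → QPoly n q)) = ⊤ := by
  rw [show Set.range (Y : Fin n → QPoly n q) =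
      RingQuot.mkAlgHom ℂ (QRel n q) '' Set.range (FreeAlgebra.ι ℂ) from by
        rw [← Set.range_comp]; rfl,
    Algebra.adjoin_image, FreeAlgebra.adjoin_range_ι, Algebra.map_top, AlgHom.range_eq_top]
  exact RingQuot.mkAlgHom_surjective ℂ (QRel n q)

theorem algHom_ext {B : Type*} [Ring B] [Algebra ℂ B] {φ ψ : QPoly n q →ₐ[ℂ] B}
    (h : ∀ k, φ (Y k) = ψ (Y k)) : φ = ψ :=
  AlgHom.ext_of_adjoin_eq_top adjoin_range_Y (by rintro _ ⟨k, rfl⟩; exact h k)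

theorem eq_zero_of_isTwistedDerivation {B : Type*} [Ring B] [Algebra ℂ B]
    {α β : QPoly n q →ₐ[ℂ] B} {D : QPoly n q →ₗ[ℂ] B} (hD : IsTwistedDerivation α β D)
    (h : ∀ k, D (Y k) = 0) : D = 0 :=
  hD.eq_zero_of_adjoin_eq_top adjoin_range_Y (by rintro _ ⟨k, rfl⟩; exact h k)

def IsQBraidFamily (σ : Fin n → (QPoly n q →ₐ[ℂ] QPoly n q)) : Prop :=
  ∀ i i' : Fin n, (i' : ℕ) = (i : ℕ) + 1 →
    σ i (Y i) = q • Y i' ∧ σ i (Y i') = q⁻¹ • Y i ∧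
    (∀ j : Fin n, (i : ℕ) + 1 < (j : ℕ) → σ i (Y j) = q • Y j) ∧
    (∀ j : Fin n, (j : ℕ) < (i : ℕ) → σ i (Y j) = q⁻¹ • Y j)

structure IsQDividedDifference (σ : Fin n → (QPoly n q →ₐ[ℂ] QPoly n q))
    (pd : Fin n → Module.End ℂ (QPoly n q)) : Prop where
  map_Y : ∀ i i' : Fin n, (i' : ℕ) = (i : ℕ) + 1 →
    pd i (Y i) = q • (1 : QPoly n q) ∧ pd i (Y i') = -1 ∧
    (∀ j : Fin n, j ≠ i → j ≠ i' → pd i (Y j) = 0)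
  isTwistedDerivation : ∀ i, IsTwistedDerivation (AlgHom.id ℂ _) (σ i) (pd i)

variable {σ : Fin n → (QPoly n q →ₐ[ℂ] QPoly n q)} {pd : Fin n → Module.End ℂ (QPoly n q)}
  {i i' j j' k : Fin n}

namespace IsQBraidFamily

theorem apply_Y_self (hσ : IsQBraidFamily σ) (hi : (i' : ℕ) = i + 1) :
    σ i (Y i) = q • Y i' :=
  (hσ i i' hi).1

theorem apply_Y_succ (hσ : IsQBraidFamily σ) (hi : (i' : ℕ) = i + 1) :
    σ i (Y i') = q⁻¹ • Y i :=
  (hσ i i' hi).2.1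

theorem apply_Y_of_succ_lt (hσ : IsQBraidFamily σ) (hi : (i' : ℕ) = i + 1)
    (hk : (i : ℕ) + 1 < k) : σ i (Y k) = q • Y k :=
  (hσ i i' hi).2.2.1 k hk

theorem apply_Y_of_lt (hσ : IsQBraidFamily σ) (hi : (i' : ℕ) = i + 1)
    (hk : (k : ℕ) < i) : σ i (Y k) = q⁻¹ • Y k :=
  (hσ i i' hi).2.2.2 k hk

theorem comp_comm (hσ : IsQBraidFamily σ) (hi : (i' : ℕ) = i + 1) (hj : (j' : ℕ) = j + 1)
    (hij : (i : ℕ) + 1 < j) : (σ j).comp (σ i) = (σ i).comp (σ j) := by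
  refine algHom_ext fun k => ?_
  rcases Fin.eq_or_eq_or_lt_or_succ_lt hi k with rfl | rfl | hk | hk <;>
  rcases Fin.eq_or_eq_or_lt_or_succ_lt hj k with rfl | rfl | hk' | hk' <;>
  first
  | omega
  | simp (disch := omega) [hσ.apply_Y_self hi, hσ.apply_Y_succ hi, hσ.apply_Y_of_lt hi,
      hσ.apply_Y_of_succ_lt hi, hσ.apply_Y_self hj, hσ.apply_Y_succ hj, hσ.apply_Y_of_lt hj,
      hσ.apply_Y_of_succ_lt hj, smul_smul, mul_comm]

end IsQBraidFamily

namespace IsQDividedDifference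

theorem map_Y_self (hpd : IsQDividedDifference σ pd) (hi : (i' : ℕ) = i + 1) :
    pd i (Y i) = q • 1 :=
  (hpd.map_Y i i' hi).1

theorem map_Y_succ (hpd : IsQDividedDifference σ pd) (hi : (i' : ℕ) = i + 1) :
    pd i (Y i') = -1 :=
  (hpd.map_Y i i' hi).2.1

theorem map_Y_of_succ_lt (hpd : IsQDividedDifference σ pd) (hi : (i' : ℕ) = i + 1)
    (hk : (i : ℕ) + 1 < k) : pd i (Y k) = 0 :=
  (hpd.map_Y i i' hi).2.2 k (by rintro rfl; omega) (by rintro rfl; omega)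

theorem map_Y_of_lt (hpd : IsQDividedDifference σ pd) (hi : (i' : ℕ) = i + 1)
    (hk : (k : ℕ) < i) : pd i (Y k) = 0 :=
  (hpd.map_Y i i' hi).2.2 k (by rintro rfl; omega) (by rintro rfl; omega)

theorem map_one (hpd : IsQDividedDifference σ pd) (i : Fin n) : pd i 1 = 0 :=
  (hpd.isTwistedDerivation i).map_one

theorem sigma_apply_add_apply_sigma (hσ : IsQBraidFamily σ) (hpd : IsQDividedDifference σ pd)
    (hq : q ≠ 0) (hi : (i' : ℕ) = i + 1) (f : QPoly n q) :
    σ i (pd i f) + pd i (σ i f) = 0 := by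
  have hD : IsTwistedDerivation (σ i) ((σ i).comp (σ i))
      ((σ i).toLinearMap ∘ₗ pd i + pd i ∘ₗ (σ i).toLinearMap) :=
    ((hpd.isTwistedDerivation i).comp_left (σ i)).add
      ((hpd.isTwistedDerivation i).comp_right (σ i))
  refine LinearMap.congr_fun (eq_zero_of_isTwistedDerivation hD fun k => ?_) f
  rcases Fin.eq_or_eq_or_lt_or_succ_lt hi k with rfl | rfl | hk | hk <;>
  simp (disch := omega) [hσ.apply_Y_self hi, hσ.apply_Y_succ hi, hσ.apply_Y_of_lt hi,
    hσ.apply_Y_of_succ_lt hi, hpd.map_Y_self hi, hpd.map_Y_succ hi, hpd.map_Y_of_lt hi,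
    hpd.map_Y_of_succ_lt hi, inv_smul_smul₀ hq]

theorem sigma_apply_eq_smul_apply_sigma (hσ : IsQBraidFamily σ)
    (hpd : IsQDividedDifference σ pd) (hq : q ≠ 0) (hi : (i' : ℕ) = i + 1)
    (hj : (j' : ℕ) = j + 1) (hij : (i : ℕ) + 1 < j) (f : QPoly n q) :
    σ j (pd i f) = q • pd i (σ j f) := by
  have hD : IsTwistedDerivation (σ j) ((σ j).comp (σ i))
      ((σ j).toLinearMap ∘ₗ pd i - q • (pd i ∘ₗ (σ j).toLinearMap)) := by
    refine ((hpd.isTwistedDerivation i).comp_left (σ j)).sub ?_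
    rw [hσ.comp_comm hi hj hij]
    exact ((hpd.isTwistedDerivation i).comp_right (σ j)).smul q
  refine sub_eq_zero.mp (LinearMap.congr_fun (eq_zero_of_isTwistedDerivation hD fun k => ?_) f)
  rcases Fin.eq_or_eq_or_lt_or_succ_lt hi k with rfl | rfl | hk | hk <;>
  rcases Fin.eq_or_eq_or_lt_or_succ_lt hj k with rfl | rfl | hk' | hk' <;>
  first
  | omega
  | simp (disch := omega) [hσ.apply_Y_self hj, hσ.apply_Y_succ hj, hσ.apply_Y_of_lt hj,
      hσ.apply_Y_of_succ_lt hj, hpd.map_Y_self hi, hpd.map_Y_succ hi, hpd.map_Y_of_lt hi,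
      hpd.map_Y_of_succ_lt hi, smul_inv_smul₀ hq]

theorem apply_sigma_eq_smul_sigma_apply (hσ : IsQBraidFamily σ)
    (hpd : IsQDividedDifference σ pd) (hi : (i' : ℕ) = i + 1)
    (hj : (j' : ℕ) = j + 1) (hij : (i : ℕ) + 1 < j) (f : QPoly n q) :
    pd j (σ i f) = q • σ i (pd j f) := by
  have hD : IsTwistedDerivation (σ i) ((σ j).comp (σ i))
      (pd j ∘ₗ (σ i).toLinearMap - q • ((σ i).toLinearMap ∘ₗ pd j)) := by
    refine ((hpd.isTwistedDerivation j).comp_right (σ i)).sub ?_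
    rw [hσ.comp_comm hi hj hij]
    exact ((hpd.isTwistedDerivation j).comp_left (σ i)).smul q
  refine sub_eq_zero.mp (LinearMap.congr_fun (eq_zero_of_isTwistedDerivation hD fun k => ?_) f)
  rcases Fin.eq_or_eq_or_lt_or_succ_lt hi k with rfl | rfl | hk | hk <;>
  rcases Fin.eq_or_eq_or_lt_or_succ_lt hj k with rfl | rfl | hk' | hk' <;>
  first
  | omega
  | simp (disch := omega) [hσ.apply_Y_self hi, hσ.apply_Y_succ hi, hσ.apply_Y_of_lt hi,
      hσ.apply_Y_of_succ_lt hi, hpd.map_Y_self hj, hpd.map_Y_succ hj, hpd.map_Y_of_lt hj,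
      hpd.map_Y_of_succ_lt hj, smul_smul]

theorem mul_self_eq_zero (hσ : IsQBraidFamily σ) (hpd : IsQDividedDifference σ pd)
    (hq : q ≠ 0) (hi : (i' : ℕ) = i + 1) : pd i * pd i = 0 := by
  refine eq_zero_of_isTwistedDerivation ((hpd.isTwistedDerivation i).mul_self
    (hpd.sigma_apply_add_apply_sigma hσ hq hi)) fun k => ?_
  rcases Fin.eq_or_eq_or_lt_or_succ_lt hi k with rfl | rfl | hk | hk <;>
  simp (disch := omega) [hpd.map_Y_self hi, hpd.map_Y_succ hi, hpd.map_Y_of_lt hi,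
    hpd.map_Y_of_succ_lt hi, hpd.map_one]

theorem mul_sub_smul_mul_eq_zero (hσ : IsQBraidFamily σ) (hpd : IsQDividedDifference σ pd)
    (hq : q ≠ 0) (hi : (i' : ℕ) = i + 1) (hj : (j' : ℕ) = j + 1) (hij : (i : ℕ) + 1 < j) :
    pd j * pd i - q • (pd i * pd j) = 0 := by
  refine eq_zero_of_isTwistedDerivation ((hpd.isTwistedDerivation i).mul_sub_smul_mul
    (hpd.isTwistedDerivation j) q (AlgHom.congr_fun (hσ.comp_comm hi hj hij))
    (hpd.sigma_apply_eq_smul_apply_sigma hσ hq hi hj hij)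
    (hpd.apply_sigma_eq_smul_sigma_apply hσ hi hj hij)) fun k => ?_
  rcases Fin.eq_or_eq_or_lt_or_succ_lt hi k with rfl | rfl | hk | hk <;>
  rcases Fin.eq_or_eq_or_lt_or_succ_lt hj k with rfl | rfl | hk' | hk' <;>
  first
  | omega
  | simp (disch := omega) [hpd.map_Y_self hi, hpd.map_Y_succ hi, hpd.map_Y_of_lt hi,
      hpd.map_Y_of_succ_lt hi, hpd.map_Y_self hj, hpd.map_Y_succ hj, hpd.map_Y_of_lt hj,
      hpd.map_Y_of_succ_lt hj, hpd.map_one]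

theorem mul_mulY_of_succ_lt (hσ : IsQBraidFamily σ) (hpd : IsQDividedDifference σ pd)
    (hi : (i' : ℕ) = i + 1) (hk : (i : ℕ) + 1 < k) :
    pd i * mulY k - q • (mulY k * pd i) = 0 := by
  ext f
  simp [mulY, (hpd.isTwistedDerivation i) (Y k) f, hpd.map_Y_of_succ_lt hi hk,
    hσ.apply_Y_of_succ_lt hi hk]

theorem mul_mulY_of_lt (hσ : IsQBraidFamily σ) (hpd : IsQDividedDifference σ pd)
    (hq : q ≠ 0) (hi : (i' : ℕ) = i + 1) (hk : (k : ℕ) < i) :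
    q • (pd i * mulY k) - mulY k * pd i = 0 := by
  ext f
  simp [mulY, (hpd.isTwistedDerivation i) (Y k) f, hpd.map_Y_of_lt hi hk,
    hσ.apply_Y_of_lt hi hk, hq]

theorem mul_mulY_self (hσ : IsQBraidFamily σ) (hpd : IsQDividedDifference σ pd)
    (hi : (i' : ℕ) = i + 1) :
    pd i * mulY i - q • (mulY i' * pd i) = q • 1 := by
  ext f
  simp [mulY, (hpd.isTwistedDerivation i) (Y i) f, hpd.map_Y_self hi,
    hσ.apply_Y_self hi]

theorem mulY_mul_self (hσ : IsQBraidFamily σ) (hpd : IsQDividedDifference σ pd)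
    (hq : q ≠ 0) (hi : (i' : ℕ) = i + 1) :
    mulY i * pd i - q • (pd i * mulY i') = q • 1 := by
  ext f
  simp only [mulY, LinearMap.sub_apply, Module.End.mul_apply, LinearMap.mulLeft_apply,
    LinearMap.smul_apply, (hpd.isTwistedDerivation i) (Y i') f, hpd.map_Y_succ hi, AlgHom.coe_id,
    id_eq, hσ.apply_Y_succ hi, smul_mul_assoc, smul_add, smul_inv_smul₀ hq, sub_add_cancel_right,
    Module.End.one_apply]
  -- this `-1` carries `RingQuot`'s own `Neg` instance, which `simp` lemmas fail to match
  rw [neg_one_mul f, smul_neg, neg_neg]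

end IsQDividedDifference

end QPoly

theorem stmt18_general (n : ℕ) (q : ℂ) (hq : q ≠ 0)
    -- `σ i` is the braid-group algebra automorphism of `P^q_n`
    (σ : Fin n → (QPoly n q →ₐ[ℂ] QPoly n q))
    (hσ : ∀ i i' : Fin n, (i' : ℕ) = (i : ℕ) + 1 →
      σ i (Y i) = q • Y i' ∧ σ i (Y i') = q⁻¹ • Y i ∧
      (∀ j : Fin n, (i : ℕ) + 1 < (j : ℕ) → σ i (Y j) = q • Y j) ∧
      (∀ j : Fin n, (j : ℕ) < (i : ℕ) → σ i (Y j) = q⁻¹ • Y j))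
    -- `pd i` is the `q`-divided difference operator `∂ᵢ`
    (pd : Fin n → Module.End ℂ (QPoly n q))
    (hpd : ∀ i i' : Fin n, (i' : ℕ) = (i : ℕ) + 1 →
      pd i (Y i) = q • (1 : QPoly n q) ∧ pd i (Y i') = -1 ∧
      (∀ j : Fin n, j ≠ i → j ≠ i' → pd i (Y j) = 0))
    -- the `q`-Leibniz rule
    (hpdL : ∀ (i : Fin n) (f g : QPoly n q),
      pd i (f * g) = pd i f * g + σ i f * pd i g)
 :
    (∀ i i' : Fin n, (i' : ℕ) = (i : ℕ) + 1 → pd i * pd i = 0) ∧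
    (∀ i i' j j' : Fin n, (i' : ℕ) = (i : ℕ) + 1 → (j' : ℕ) = (j : ℕ) + 1 →
      (i : ℕ) + 1 < (j : ℕ) → pd j * pd i - q • (pd i * pd j) = 0) ∧
    (∀ i i' j : Fin n, (i' : ℕ) = (i : ℕ) + 1 → (i : ℕ) + 1 < (j : ℕ) →
      pd i * mulY j - q • (mulY j * pd i) = 0) ∧
    (∀ i i' j : Fin n, (i' : ℕ) = (i : ℕ) + 1 → (j : ℕ) < (i : ℕ) →
      q • (pd i * mulY j) - mulY j * pd i = 0) ∧
    (∀ i i' : Fin n, (i' : ℕ) = (i : ℕ) + 1 →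
      pd i * mulY i - q • (mulY i' * pd i) = q • (1 : Module.End ℂ (QPoly n q))) ∧
    (∀ i i' : Fin n, (i' : ℕ) = (i : ℕ) + 1 →
      mulY i * pd i - q • (pd i * mulY i') = q • (1 : Module.End ℂ (QPoly n q))) := by
  have hpd' : QPoly.IsQDividedDifference σ pd := ⟨hpd, hpdL⟩
  exact ⟨fun _ _ hi => hpd'.mul_self_eq_zero hσ hq hi,
    fun _ _ _ _ hi hj hij => hpd'.mul_sub_smul_mul_eq_zero hσ hq hi hj hij,
    fun _ _ _ hi hk => hpd'.mul_mulY_of_succ_lt hσ hi hk,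
    fun _ _ _ hi hk => hpd'.mul_mulY_of_lt hσ hq hi hk,
    fun _ _ hi => hpd'.mul_mulY_self hσ hi,
    fun _ _ hi => hpd'.mulY_mul_self hσ hq hi⟩

/-- The defining relations of the `q`-nilHecke algebra, as operator identities on `P^q_n`
(with `xⱼ` denoting left multiplication): `∂ᵢ² = 0`; `∂ⱼ∂ᵢ − q∂ᵢ∂ⱼ = 0` for `j > i+1`;
`∂ᵢxⱼ − qxⱼ∂ᵢ = 0` for `j > i+1`; `q∂ᵢxⱼ − xⱼ∂ᵢ = 0` for `j < i`;
`∂ᵢxᵢ − qx_{i+1}∂ᵢ = q`; and `xᵢ∂ᵢ − q∂ᵢx_{i+1} = q`. -/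
theorem stmt18 (n : ℕ) (hn : 2 ≤ n) (q : ℂ) (hq : q ≠ 0)
    -- `σ i` is the braid-group algebra automorphism of `P^q_n`
    (σ : Fin n → (QPoly n q →ₐ[ℂ] QPoly n q))
    (hσ : ∀ i i' : Fin n, (i' : ℕ) = (i : ℕ) + 1 →
      σ i (Y i) = q • Y i' ∧ σ i (Y i') = q⁻¹ • Y i ∧
      (∀ j : Fin n, (i : ℕ) + 1 < (j : ℕ) → σ i (Y j) = q • Y j) ∧
      (∀ j : Fin n, (j : ℕ) < (i : ℕ) → σ i (Y j) = q⁻¹ • Y j))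
    -- `pd i` is the `q`-divided difference operator `∂ᵢ`
    (pd : Fin n → Module.End ℂ (QPoly n q))
    (hpd : ∀ i i' : Fin n, (i' : ℕ) = (i : ℕ) + 1 →
      pd i (Y i) = q • (1 : QPoly n q) ∧ pd i (Y i') = -1 ∧
      (∀ j : Fin n, j ≠ i → j ≠ i' → pd i (Y j) = 0))
    -- the `q`-Leibniz rule
    (hpdL : ∀ (i : Fin n) (f g : QPoly n q),
      pd i (f * g) = pd i f * g + σ i f * pd i g)
 :
    (∀ i i' : Fin n, (i' : ℕ) = (i : ℕ) + 1 → pd i * pd i = 0) ∧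
    (∀ i i' j j' : Fin n, (i' : ℕ) = (i : ℕ) + 1 → (j' : ℕ) = (j : ℕ) + 1 →
      (i : ℕ) + 1 < (j : ℕ) → pd j * pd i - q • (pd i * pd j) = 0) ∧
    (∀ i i' j : Fin n, (i' : ℕ) = (i : ℕ) + 1 → (i : ℕ) + 1 < (j : ℕ) →
      pd i * mulY j - q • (mulY j * pd i) = 0) ∧
    (∀ i i' j : Fin n, (i' : ℕ) = (i : ℕ) + 1 → (j : ℕ) < (i : ℕ) →
      q • (pd i * mulY j) - mulY j * pd i = 0) ∧
    (∀ i i' : Fin n, (i' : ℕ) = (i : ℕ) + 1 →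
      pd i * mulY i - q • (mulY i' * pd i) = q • (1 : Module.End ℂ (QPoly n q))) ∧
    (∀ i i' : Fin n, (i' : ℕ) = (i : ℕ) + 1 →
      mulY i * pd i - q • (pd i * mulY i') = q • (1 : Module.End ℂ (QPoly n q))) :=
  stmt18_general n q hq σ hσ pd hpd hpdL
end
end
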